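/- arXiv:1308.4670 — 9 statements merged into one kernel-verified Lean document; each statement's English description precedes it below -/
import Mathlib

section
/- Let P ⊆ ℝ² and let G, W ⊆ P be finite sets of guard and witness positions. The polytope conv(AGP(G,W)) ⊆ ℝ^G is full-dimensional if and only if every witness sees at least two guards, i.e., |V(w) ∩ G| ≥ 2 for all w ∈ W. -/
/-- Points of the Euclidean plane. -/
abbrev Pt := EuclideanSpace ℝ (Fin 2)

/-- Visibility region of `p` in `P`: points `q ∈ P` such that the closed segment
from `p` to `q` lies in `P`. -/
def Vis (P : Set Pt) (p : Pt) : Set Pt := {q ∈ P | segment ℝ p q ⊆ P}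

/-- Feasible binary solutions of `AGP(G,W)`: `x ∈ {0,1}^G` such that every witness
`w ∈ W` is seen by some guard `g ∈ G ∩ V(w)` with `x g = 1`. -/
def Feasible (P : Set Pt) (G W : Finset Pt) : Set (↥G → ℝ) :=
  {x | (∀ g, x g = 0 ∨ x g = 1) ∧
    ∀ w ∈ W, ∃ g : ↥G, (g : Pt) ∈ Vis P w ∧ x g = 1}

/-!
A witness seeing no guard makes the feasible set empty, and a witness seeing a single guard `a`
forces `x a = 1` on it; either way the feasible points lie in a proper affine subspace.
Conversely, if every witness sees two guards, the all-ones vector stays feasible after switching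
off any one guard `g`, and the differences of these vectors are the unit vectors `e_g`.
-/

open Set

section AffineSpanPi

variable {k ι : Type*} [Field k]

theorem affineSpan_ne_top_of_forall_apply_eq {s : Set (ι → k)} (i : ι) (c : k)
    (hs : ∀ x ∈ s, x i = c) : affineSpan k s ≠ ⊤ := by
  classical
  intro h
  have hle : vectorSpan k s ≤ LinearMap.ker (LinearMap.proj i) := by
    rw [vectorSpan_def, Submodule.span_le]
    rintro _ ⟨x, hx, y, hy, rfl⟩
    simp [hs x hx, hs y hy]
  have hsingle : Pi.single i (1 : k) ∈ vectorSpan k s := by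
    rw [AffineSubspace.vectorSpan_eq_top_of_affineSpan_eq_top k _ _ h]
    trivial
  simpa using hle hsingle

theorem affineSpan_eq_top_of_sub_single_mem [Finite ι] [DecidableEq ι] {s : Set (ι → k)}
    {c : ι → k} (hc : c ∈ s) (h : ∀ i, c - Pi.single i 1 ∈ s) : affineSpan k s = ⊤ := by
  rw [AffineSubspace.affineSpan_eq_top_iff_vectorSpan_eq_top_of_nonempty k _ _ ⟨c, hc⟩,
    eq_top_iff, ← (Pi.basisFun k ι).span_eq, Submodule.span_le]
  rintro _ ⟨i, rfl⟩
  simpa using vsub_mem_vectorSpan k hc (h i)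

end AffineSpanPi

section Feasible

variable {P : Set Pt} {G W : Finset Pt} {w : Pt}

theorem feasible_eq_empty_of_vis_inter_eq_empty (hw : w ∈ W) (h : Vis P w ∩ ↑G = ∅) :
    Feasible P G W = ∅ := by
  refine eq_empty_of_forall_notMem ?_
  rintro x ⟨-, hx⟩
  obtain ⟨g, hg, -⟩ := hx w hw
  exact h.subset ⟨hg, g.2⟩

theorem apply_eq_one_of_mem_feasible {a : Pt} (hw : w ∈ W) (h : Vis P w ∩ ↑G = {a})
    (ha : a ∈ G) {x : ↥G → ℝ} (hx : x ∈ Feasible P G W) : x ⟨a, ha⟩ = 1 := by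
  obtain ⟨g, hg, hxg⟩ := hx.2 w hw
  have hga : g = ⟨a, ha⟩ := Subtype.ext (h.subset ⟨hg, g.2⟩)
  exact hga ▸ hxg

theorem one_mem_feasible (h : ∀ w ∈ W, (Vis P w ∩ ↑G).Nonempty) : 1 ∈ Feasible P G W := by
  refine ⟨fun _ => Or.inr rfl, fun w hw => ?_⟩
  obtain ⟨a, haV, haG⟩ := h w hw
  exact ⟨⟨a, haG⟩, haV, rfl⟩

theorem one_sub_single_mem_feasible [DecidableEq ↥G] (h : ∀ w ∈ W, 2 ≤ (Vis P w ∩ ↑G).ncard)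
    (g : ↥G) : 1 - Pi.single g 1 ∈ Feasible P G W := by
  refine ⟨fun g' => ?_, fun w hw => ?_⟩
  · rcases eq_or_ne g' g with rfl | hne
    · simp
    · simp [hne]
  · obtain ⟨b, ⟨hbV, hbG⟩, hbg⟩ := exists_ne_of_one_lt_ncard (h w hw) (g : Pt)
    have hne : (⟨b, hbG⟩ : ↥G) ≠ g := fun h => hbg (congrArg Subtype.val h)
    exact ⟨⟨b, hbG⟩, hbV, by simp [hne]⟩

theorem two_le_ncard_vis_inter_of_affineSpan_eq_top (h : affineSpan ℝ (Feasible P G W) = ⊤)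
    (hw : w ∈ W) : 2 ≤ (Vis P w ∩ ↑G).ncard := by
  by_contra hlt
  have hfin : (Vis P w ∩ ↑G).Finite := G.finite_toSet.subset inter_subset_right
  obtain h1 | ⟨a, h1⟩ := (ncard_le_one_iff_eq hfin).mp (by omega)
  · exact (AffineSubspace.nonempty_of_affineSpan_eq_top ℝ _ _ h).ne_empty
      (feasible_eq_empty_of_vis_inter_eq_empty hw h1)
  · have ha : a ∈ G := (h1 ▸ mem_singleton a : a ∈ Vis P w ∩ ↑G).2
    exact affineSpan_ne_top_of_forall_apply_eq _ 1
      (fun x hx => apply_eq_one_of_mem_feasible hw h1 ha hx) h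

end Feasible

theorem agp_fulldim_iff_general (P : Set Pt) (G W : Finset Pt) :
    affineSpan ℝ (convexHull ℝ (Feasible P G W)) = ⊤ ↔
      ∀ w ∈ W, 2 ≤ (Vis P w ∩ ↑G).ncard := by
  classical
  rw [affineSpan_convexHull]
  refine ⟨fun h w hw => two_le_ncard_vis_inter_of_affineSpan_eq_top h hw, fun h => ?_⟩
  have hnonempty w hw : (Vis P w ∩ ↑G).Nonempty :=
    nonempty_of_ncard_ne_zero (by have := h w hw; omega)
  exact affineSpan_eq_top_of_sub_single_mem (one_mem_feasible hnonempty)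
    (one_sub_single_mem_feasible h)

/-- For finite `G, W ⊆ P`, the art gallery polytope
`conv(AGP(G,W)) ⊆ ℝ^G` is full-dimensional iff every witness sees at least two
guards, i.e. `|V(w) ∩ G| ≥ 2` for all `w ∈ W`. -/
theorem agp_fulldim_iff (P : Set Pt) (G W : Finset Pt) (hG : ↑G ⊆ P) (hW : ↑W ⊆ P) :
    affineSpan ℝ (convexHull ℝ (Feasible P G W)) = ⊤ ↔
      ∀ w ∈ W, 2 ≤ (Vis P w ∩ ↑G).ncard :=
  agp_fulldim_iff_general P G W
end

section
/- Let P together with G = {g_1, …, g_k} and W = {w_1, …, w_k} be a full circulant polygon P_k^{k−1} with k ≥ 4. Then P has no holes, i.e., the complement ℝ² \ P has no bounded connected component. -/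
/-- A polygonal region: a compact connected subset of the plane equal to the closure of
its interior, whose frontier is contained in finitely many closed segments. -/
def IsPolygonalRegion (P : Set Pt) : Prop :=
  IsCompact P ∧ IsConnected P ∧ P = closure (interior P) ∧
  ∃ E : Finset (Pt × Pt), frontier P ⊆ ⋃ e ∈ E, segment ℝ e.1 e.2

/-- A full circulant polygon `P_k^{k-1}`: a polygonal region `P` with pairwise distinct
guards `g 0, …, g (k-1) ∈ P` and witnesses `w 0, …, w (k-1) ∈ P` such that
`V(g i) ∩ W = W \ {w i}` for all `i`, and every point of `P` sees at least `k - 1`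
of the guards. -/
def IsFullCirculant (P : Set Pt) (k : ℕ) (g w : Fin k → Pt) : Prop :=
  IsPolygonalRegion P ∧
  Function.Injective g ∧ Function.Injective w ∧
  (∀ i, g i ∈ P) ∧ (∀ i, w i ∈ P) ∧
  (∀ i, Vis P (g i) ∩ Set.range w = Set.range w \ {w i}) ∧
  (∀ p ∈ P, k - 1 ≤ (Vis P p ∩ Set.range g).ncard)

/-!
Let `H` be the component of `Pᶜ` containing `p`, and suppose it is bounded. Shoot a ray from `p`
in a generic direction `v`: the first point `z` where it leaves `H` lies on a boundary edge and
near `z` the frontier is contained in the line of that edge, so `H` fills the open half-plane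
behind the edge near `z`. The normal `m` of the edge pointing away from `p` satisfies
`⟪m, v⟫ > 0`. There are finitely many edge normals and generic directions are dense, so `0` lies
in the convex hull of these hole normals, and by Carathéodory in the hull of at most three of
them. Hence for every guard `g` one of these three normals `m`, attached to `z`, has
`⟪m, g - p⟫ ≤ 0`; then `z` cannot see `g`, since the segment from `z` to `g` starts into `H`.
With `k ≥ 4` guards two of them share a normal, so the point `z ∈ P` sees at most `k - 2`
guards.
-/

open Set Filter Topology Metric Bornology RealInnerProductSpace Module Convex

section Topology

variable {X : Type*} [TopologicalSpace X]

lemma subset_connectedComponentIn_compl_of_disjoint_frontier {P B : Set X} {p : X}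
    (hB : IsPreconnected B) (hBP : Disjoint B (frontier P))
    (hBH : (B ∩ connectedComponentIn Pᶜ p).Nonempty) : B ⊆ connectedComponentIn Pᶜ p := by
  obtain ⟨y, hyB, hyH⟩ := hBH
  have hyP : y ∉ closure P := fun hy =>
    hBP.notMem_of_mem_left hyB ⟨hy, fun hy' => connectedComponentIn_subset _ _ hyH
      (interior_subset hy')⟩
  have hsplit : B ⊆ (closure P)ᶜ ∪ interior P := fun x hx => by
    by_cases h : x ∈ closure P
    · exact Or.inr (by_contra fun h' => hBP.notMem_of_mem_left hx ⟨h, h'⟩)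
    · exact Or.inl h
  have hBPc : B ⊆ Pᶜ := (hB.subset_left_of_subset_union isClosed_closure.isOpen_compl
    isOpen_interior (disjoint_compl_left.mono_right interior_subset_closure) hsplit
    ⟨y, hyB, hyP⟩).trans (compl_subset_compl.2 subset_closure)
  rw [connectedComponentIn_eq hyH]
  exact hB.subset_connectedComponentIn hyB hBPc

end Topology

section Normed

variable {V : Type*} [NormedAddCommGroup V] [NormedSpace ℝ V]

lemma mem_frontier_of_mem_closure_connectedComponentIn_compl {P : Set V} {p z : V}
    (hz : z ∈ closure (connectedComponentIn Pᶜ p)) (hzH : z ∉ connectedComponentIn Pᶜ p) :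
    z ∈ frontier P := by
  by_contra hzP
  obtain ⟨ε, hε, hball⟩ := Metric.isOpen_iff.1 isClosed_frontier.isOpen_compl z hzP
  exact hzH <| subset_connectedComponentIn_compl_of_disjoint_frontier
    (convex_ball z ε).isPreconnected (disjoint_compl_left.mono_left hball)
    (mem_closure_iff.1 hz _ isOpen_ball (mem_ball_self hε)) (mem_ball_self hε)

lemma exists_first_exit {H : Set V} (hHo : IsOpen H) (hHb : IsBounded H) {p v : V}
    (hp : p ∈ H) (hv : v ≠ 0) :
    ∃ t₀ > (0 : ℝ), p + t₀ • v ∉ H ∧ ∀ t ∈ Ico 0 t₀, p + t • v ∈ H := by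
  set T := {t : ℝ | 0 ≤ t ∧ p + t • v ∉ H}
  have hTclosed : IsClosed T := isClosed_Ici.inter (hHo.isClosed_compl.preimage (by fun_prop))
  have hTbdd : BddBelow T := ⟨0, fun t ht => ht.1⟩
  have hTne : T.Nonempty := by
    obtain ⟨r, hr⟩ := hHb.subset_closedBall p
    have hvpos : 0 < ‖v‖ := norm_pos_iff.2 hv
    refine ⟨(|r| + 1) / ‖v‖, by positivity, fun hH => ?_⟩
    have := mem_closedBall.1 (hr hH)
    rw [dist_eq_norm, add_sub_cancel_left, norm_smul, Real.norm_of_nonneg (by positivity),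
      div_mul_cancel₀ _ hvpos.ne'] at this
    linarith [le_abs_self r]
  obtain ⟨h₀, hexit⟩ := hTclosed.csInf_mem hTne hTbdd
  refine ⟨sInf T, h₀.lt_of_ne fun h => ?_, hexit, fun t ht =>
    by_contra fun hH => notMem_of_lt_csInf ht.2 hTbdd ⟨ht.1, hH⟩⟩
  rw [← h, zero_smul, add_zero] at hexit
  exact hexit hp

lemma sub_mem_span_of_mem_segment {a b x y : V} (hx : x ∈ [a -[ℝ] b]) (hy : y ∈ [a -[ℝ] b]) :
    x - y ∈ ℝ ∙ (b - a) := by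
  rw [segment_eq_image'] at hx hy
  obtain ⟨s, -, rfl⟩ := hx
  obtain ⟨t, -, rfl⟩ := hy
  rw [add_sub_add_left_eq_sub, ← sub_smul]
  exact Submodule.smul_mem _ _ (Submodule.mem_span_singleton_self _)

lemma segment_inter_segment_subsingleton {a b a' b' : V}
    (h : b - a = 0 ∨ b - a ∉ ℝ ∙ (b' - a')) : ([a -[ℝ] b] ∩ [a' -[ℝ] b']).Subsingleton := by
  intro x hx y hy
  obtain ⟨c, hc⟩ := Submodule.mem_span_singleton.1 (sub_mem_span_of_mem_segment hx.1 hy.1)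
  obtain ⟨c', hc'⟩ := Submodule.mem_span_singleton.1 (sub_mem_span_of_mem_segment hx.2 hy.2)
  rw [← sub_eq_zero, ← hc]
  rcases h with h | h
  · rw [h, smul_zero]
  · by_contra hne
    refine h (Submodule.mem_span_singleton.2 ⟨c⁻¹ * c', ?_⟩)
    rw [mul_smul, hc', ← hc, inv_smul_smul₀ (left_ne_zero_of_smul hne)]

/-- The points where the segments of `E` are not locally collinear. -/
def cornerPoints (E : Finset (V × V)) : Set V :=
  ⋃ e ∈ E, ⋃ e' ∈ E, {x | x ∈ [e.1 -[ℝ] e.2] ∧ x ∈ [e'.1 -[ℝ] e'.2] ∧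
    (e.2 - e.1 = 0 ∨ e.2 - e.1 ∉ ℝ ∙ (e'.2 - e'.1))}

lemma cornerPoints_finite (E : Finset (V × V)) : (cornerPoints E).Finite :=
  E.finite_toSet.biUnion fun _ _ => E.finite_toSet.biUnion fun _ _ =>
    Subsingleton.finite fun _x hx _y hy =>
      segment_inter_segment_subsingleton hx.2.2 ⟨hx.1, hx.2.1⟩ ⟨hy.1, hy.2.1⟩

lemma exists_eventually_frontier_sub_mem_span {P : Set V} {E : Finset (V × V)}
    (hfr : frontier P ⊆ ⋃ e ∈ E, [e.1 -[ℝ] e.2]) {z : V} (hz : z ∈ frontier P)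
    (hzc : z ∉ cornerPoints E) :
    ∃ e ∈ E, e.2 - e.1 ≠ 0 ∧ ∀ᶠ y in 𝓝 z, y ∈ frontier P → y - z ∈ ℝ ∙ (e.2 - e.1) := by
  have hzc' : ∀ e ∈ E, ∀ e' ∈ E, z ∈ [e.1 -[ℝ] e.2] → z ∈ [e'.1 -[ℝ] e'.2] →
      e.2 - e.1 ≠ 0 ∧ e.2 - e.1 ∈ ℝ ∙ (e'.2 - e'.1) := fun e he e' he' hze hze' => by
    by_contra h
    exact hzc (mem_biUnion he (mem_biUnion he' ⟨hze, hze', not_and_or.1 h |>.imp not_not.1 id⟩))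
  obtain ⟨e, he, hze⟩ := mem_iUnion₂.1 (hfr hz)
  refine ⟨e, he, (hzc' e he e he hze hze).1, ?_⟩
  have hfar : IsClosed (⋃ e' ∈ {e' ∈ (E : Set (V × V)) | z ∉ [e'.1 -[ℝ] e'.2]},
      [e'.1 -[ℝ] e'.2]) :=
    (E.finite_toSet.sep _).isClosed_biUnion fun e' _ => by
      rw [← convexHull_pair]
      exact (toFinite _).isCompact_convexHull (𝕜 := ℝ) |>.isClosed
  filter_upwards [hfar.isOpen_compl.mem_nhds (by simp)] with y hy hyP
  obtain ⟨e', he', hye'⟩ := mem_iUnion₂.1 (hfr hyP)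
  have hze' : z ∈ [e'.1 -[ℝ] e'.2] := by_contra fun h => hy (mem_biUnion ⟨he', h⟩ hye')
  exact Submodule.span_singleton_le_iff_mem _ _ |>.2 (hzc' e' he' e he hze' hze).2
    (sub_mem_span_of_mem_segment hye' hze')

lemma dense_setOf_forall_notMem_span_singleton [FiniteDimensional ℝ V] (hV : 1 < finrank ℝ V)
    {D : Set V} (hD : D.Finite) : Dense {v : V | ∀ d ∈ D, v ∉ ℝ ∙ d} := by
  have hInter : {v : V | ∀ d ∈ D, v ∉ ℝ ∙ d} = ⋂ d ∈ D, (ℝ ∙ d : Set V)ᶜ := by ext; simp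
  rw [hInter]
  refine dense_biInter_of_isOpen
    (fun d _ => (Submodule.closed_of_finiteDimensional _).isOpen_compl) hD.countable fun d _ => ?_
  rw [← interior_eq_empty_iff_dense_compl, ← not_nonempty_iff_eq_empty]
  intro hint
  have hle := finrank_span_le_card (R := ℝ) ({d} : Set V)
  rw [(ℝ ∙ d).eq_top_of_nonempty_interior' hint, finrank_top, toFinset_singleton,
    Finset.card_singleton] at hle
  omega

end Normed

section InnerProduct

variable {V : Type*} [NormedAddCommGroup V] [InnerProductSpace ℝ V]

lemma convex_setOf_inner_sub_neg (m z : V) : Convex ℝ {y : V | ⟪m, y - z⟫ < 0} := by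
  simp_rw [inner_sub_right, sub_neg]
  exact convex_halfSpace_lt (innerₛₗ ℝ m).isLinear _

lemma eventually_mem_connectedComponentIn_compl_of_flat_frontier {P : Set V} {p m z : V}
    (hflat : ∀ᶠ y in 𝓝 z, y ∈ frontier P → ⟪m, y - z⟫ = 0)
    (hH : ∃ᶠ y in 𝓝 z, ⟪m, y - z⟫ < 0 ∧ y ∈ connectedComponentIn Pᶜ p) :
    ∀ᶠ y in 𝓝 z, ⟪m, y - z⟫ < 0 → y ∈ connectedComponentIn Pᶜ p := by
  obtain ⟨δ, hδ, hball⟩ := Metric.eventually_nhds_iff.1 hflat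
  have hB : ball z δ ∩ {y | ⟪m, y - z⟫ < 0} ⊆ connectedComponentIn Pᶜ p := by
    refine subset_connectedComponentIn_compl_of_disjoint_frontier
      ((convex_ball z δ).inter (convex_setOf_inner_sub_neg m z)).isPreconnected
      (disjoint_left.2 fun y hy hyP => (hball hy.1 hyP).not_lt hy.2) ?_
    obtain ⟨y, ⟨hyneg, hyH⟩, hyball⟩ := (hH.and_eventually (ball_mem_nhds z hδ)).exists
    exact ⟨y, ⟨hyball, hyneg⟩, hyH⟩
  filter_upwards [ball_mem_nhds z hδ] with y hy hneg using hB ⟨hy, hneg⟩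

lemma exists_inner_nonpos_of_zero_mem_convexHull {T : Set V} (h0 : (0 : V) ∈ convexHull ℝ T)
    (x : V) : ∃ m ∈ T, ⟪m, x⟫ ≤ 0 := by
  by_contra! h
  have hhalf : Convex ℝ {m : V | 0 < ⟪m, x⟫} := by
    simp_rw [real_inner_comm x]
    exact convex_halfSpace_gt (innerₛₗ ℝ x).isLinear _
  have h00 : 0 < ⟪(0 : V), x⟫ := convexHull_min h hhalf h0
  simp at h00

/-- `m` is an outward normal at `z ∈ P` of the component of `Pᶜ` containing `p`: near `z` this
component fills the open half-plane on the side of `-m`, on which `p` lies too. -/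
def IsHoleNormal (P : Set V) (p m z : V) : Prop :=
  z ∈ P ∧ ⟪m, p - z⟫ < 0 ∧ ∀ᶠ y in 𝓝 z, ⟪m, y - z⟫ < 0 → y ∈ connectedComponentIn Pᶜ p

end InnerProduct

section ConvexHull

variable {V : Type*} [NormedAddCommGroup V] [InnerProductSpace ℝ V] [FiniteDimensional ℝ V]

lemma zero_mem_convexHull_of_dense {S : Set V} (hS : S.Finite)
    (hd : Dense {x : V | ∃ m ∈ S, 0 < ⟪m, x⟫}) : (0 : V) ∈ convexHull ℝ S := by
  by_contra h0
  obtain ⟨f, u, hf, hu⟩ := geometric_hahn_banach_closed_point (convex_convexHull ℝ S)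
    (hS.isCompact_convexHull (𝕜 := ℝ)).isClosed h0
  set y := (InnerProductSpace.toDual ℝ V).symm f
  have hneg : y ∈ ⋂ m ∈ S, {x : V | ⟪m, x⟫ < 0} := mem_iInter₂.2 fun m hm => by
    rw [mem_ofPred_eq, real_inner_comm, InnerProductSpace.toDual_symm_apply]
    linarith [hf m (subset_convexHull ℝ S hm), map_zero f]
  obtain ⟨x, hxU, m, hm, hpos⟩ := hd.inter_open_nonempty _
    (hS.isOpen_biInter fun m _ => isOpen_lt (by fun_prop) continuous_const) ⟨y, hneg⟩
  exact lt_asymm hpos (mem_iInter₂.1 hxU m hm)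

lemma exists_finset_card_le_finrank_succ_of_mem_convexHull {S : Set V} {x : V}
    (hx : x ∈ convexHull ℝ S) :
    ∃ T : Finset V, ↑T ⊆ S ∧ T.card ≤ finrank ℝ V + 1 ∧ x ∈ convexHull ℝ (T : Set V) := by
  rw [convexHull_eq_union] at hx
  simp only [mem_iUnion] at hx
  obtain ⟨T, hTS, hT, hxT⟩ := hx
  refine ⟨T, hTS, ?_, hxT⟩
  have := hT.card_le_finrank_succ
  rw [Fintype.card_coe] at this
  exact this.trans (Nat.succ_le_succ (Submodule.finrank_le _))

end ConvexHull

section Plane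

variable {V : Type*} [NormedAddCommGroup V] [InnerProductSpace ℝ V] [Fact (finrank ℝ V = 2)]
  (o : Orientation ℝ V (Fin 2))

lemma Orientation.mem_span_singleton_of_inner_rightAngleRotation_eq_zero {d v : V} (hd : d ≠ 0)
    (h : ⟪o.rightAngleRotation d, v⟫ = 0) : v ∈ ℝ ∙ d := by
  rw [o.inner_rightAngleRotation_left] at h
  rcases le_total 0 ⟪d, v⟫ with hv | hv
  · obtain ⟨r, -, rfl⟩ :=
      ((o.nonneg_inner_and_areaForm_eq_zero_iff_sameRay d v).1 ⟨hv, h⟩).exists_nonneg_left hd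
    exact Submodule.smul_mem _ _ (Submodule.mem_span_singleton_self d)
  · obtain ⟨r, -, hr⟩ := ((o.nonneg_inner_and_areaForm_eq_zero_iff_sameRay d (-v)).1
      ⟨by rwa [inner_neg_right, neg_nonneg], by rw [map_neg, h, neg_zero]⟩).exists_nonneg_left hd
    rw [← neg_neg v, ← hr]
    exact Submodule.neg_mem _ (Submodule.smul_mem _ _ (Submodule.mem_span_singleton_self d))

def edgeNormals (E : Finset (V × V)) : Set V :=
  ⋃ e ∈ E, {o.rightAngleRotation (e.2 - e.1), -o.rightAngleRotation (e.2 - e.1)}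

lemma edgeNormals_finite (E : Finset (V × V)) : (edgeNormals o E).Finite :=
  E.finite_toSet.biUnion fun _ _ => toFinite _

theorem exists_isHoleNormal_inner_pos {P : Set V} (hP : IsClosed P) {E : Finset (V × V)}
    (hfr : frontier P ⊆ ⋃ e ∈ E, [e.1 -[ℝ] e.2]) {p : V} (hp : p ∉ P)
    (hb : IsBounded (connectedComponentIn Pᶜ p)) {v : V} (hv : v ≠ 0)
    (hvE : ∀ e ∈ E, v ∉ ℝ ∙ (e.2 - e.1)) (hvc : ∀ x ∈ cornerPoints E, v ∉ ℝ ∙ (x - p)) :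
    ∃ m ∈ edgeNormals o E, (∃ z, IsHoleNormal P p m z) ∧ 0 < ⟪m, v⟫ := by
  set H := connectedComponentIn Pᶜ p
  obtain ⟨t₀, ht₀, hexit, hbefore⟩ :=
    exists_first_exit hP.isOpen_compl.connectedComponentIn hb (mem_connectedComponentIn hp) hv
  set z := p + t₀ • v
  have hray : Tendsto (fun t : ℝ => p + t • v) (𝓝[<] t₀) (𝓝 z) :=
    tendsto_nhdsWithin_of_tendsto_nhds <|
      (by fun_prop : Continuous fun t : ℝ => p + t • v).tendsto t₀
  have hinside : ∀ᶠ t in 𝓝[<] t₀, p + t • v ∈ H := mem_of_superset (Ico_mem_nhdsLT ht₀) hbefore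
  have hzfr : z ∈ frontier P := mem_frontier_of_mem_closure_connectedComponentIn_compl
    (mem_closure_of_tendsto hray hinside) hexit
  have hzc : z ∉ cornerPoints E := fun hz => hvc z hz <| by
    rw [add_sub_cancel_left]
    exact Submodule.mem_span_singleton.2 ⟨t₀⁻¹, inv_smul_smul₀ ht₀.ne' v⟩
  obtain ⟨e, he, hd, hloc⟩ := exists_eventually_frontier_sub_mem_span hfr hzfr hzc
  set J := o.rightAngleRotation
  have hJv : ⟪J (e.2 - e.1), v⟫ ≠ 0 := fun h =>
    hvE e he (o.mem_span_singleton_of_inner_rightAngleRotation_eq_zero hd h)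
  obtain ⟨m, hm, hmv⟩ : ∃ m ∈ ({J (e.2 - e.1), -J (e.2 - e.1)} : Set V), 0 < ⟪m, v⟫ := by
    rcases hJv.lt_or_gt with h | h
    · exact ⟨_, Or.inr rfl, by rwa [inner_neg_left, neg_pos]⟩
    · exact ⟨_, Or.inl rfl, h⟩
  have hmd : ∀ y ∈ ℝ ∙ (e.2 - e.1), ⟪m, y⟫ = 0 := fun y hy => by
    obtain ⟨c, rfl⟩ := Submodule.mem_span_singleton.1 hy
    rcases hm with rfl | rfl <;>
      simp only [real_inner_smul_right, inner_neg_left, J, o.inner_rightAngleRotation_self,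
        mul_zero, neg_zero]
  refine ⟨m, mem_biUnion he hm, ⟨z, hP.frontier_subset hzfr, ?_, ?_⟩, hmv⟩
  · rw [show p - z = -(t₀ • v) by simp [z], inner_neg_right, real_inner_smul_right,
      neg_neg_iff_pos]
    positivity
  · refine eventually_mem_connectedComponentIn_compl_of_flat_frontier
      (hloc.mono fun y hy hyP => hmd _ (hy hyP)) (hray.frequently ?_)
    refine (hinside.and self_mem_nhdsWithin).frequently.mono fun t ht => ⟨?_, ht.1⟩
    rw [show p + t • v - z = (t - t₀) • v by simp [z, sub_smul], real_inner_smul_right]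
    exact mul_neg_of_neg_of_pos (sub_neg.2 ht.2) hmv

theorem zero_mem_convexHull_isHoleNormal {P : Set V} (hP : IsClosed P) {E : Finset (V × V)}
    (hfr : frontier P ⊆ ⋃ e ∈ E, [e.1 -[ℝ] e.2]) {p : V} (hp : p ∉ P)
    (hb : IsBounded (connectedComponentIn Pᶜ p)) :
    (0 : V) ∈ convexHull ℝ {m ∈ edgeNormals o E | ∃ z, IsHoleNormal P p m z} := by
  have := FiniteDimensional.of_fact_finrank_eq_two (K := ℝ) (V := V)
  refine zero_mem_convexHull_of_dense ((edgeNormals_finite o E).sep _) ?_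
  set D : Set V := insert 0 ((fun e : V × V => e.2 - e.1) '' E ∪ (· - p) '' cornerPoints E)
  have hD : D.Finite :=
    ((E.finite_toSet.image _).union ((cornerPoints_finite E).image _)).insert 0
  have hV : 1 < finrank ℝ V := by rw [Fact.out (p := finrank ℝ V = 2)]; exact one_lt_two
  refine (dense_setOf_forall_notMem_span_singleton hV hD).mono fun v hv => ?_
  obtain ⟨m, hm, hz, hmv⟩ := exists_isHoleNormal_inner_pos o hP hfr hp hb
    (fun h => hv 0 (mem_insert _ _) (by simp [h]))
    (fun e he => hv _ (Or.inr (Or.inl (mem_image_of_mem _ he))))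
    (fun x hx => hv _ (Or.inr (Or.inr (mem_image_of_mem _ hx))))
  exact ⟨m, ⟨hm, hz⟩, hmv⟩

end Plane

section Guards

variable {P : Set Pt} {p m z : Pt}

lemma IsHoleNormal.notMem_vis (h : IsHoleNormal P p m z) {y : Pt} (hy : ⟪m, y - p⟫ ≤ 0) :
    y ∉ Vis P z := by
  intro hvis
  obtain ⟨-, hpz, hnear⟩ := h
  have hyz : ⟪m, y - z⟫ < 0 := by
    rw [← sub_add_sub_cancel y p z, inner_add_right]
    linarith
  have hseg : Tendsto (fun t : ℝ => z + t • (y - z)) (𝓝[>] 0) (𝓝 z) :=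
    tendsto_nhdsWithin_of_tendsto_nhds <|
      (by fun_prop : Continuous fun t : ℝ => z + t • (y - z)).tendsto' 0 z (by simp)
  obtain ⟨t, hH, ht0, ht1⟩ := ((hseg.eventually hnear).and (Ioo_mem_nhdsGT one_pos)).exists
  have hmem : z + t • (y - z) ∈ [z -[ℝ] y] := by
    rw [segment_eq_image']
    exact ⟨t, ⟨ht0.le, ht1.le⟩, rfl⟩
  refine connectedComponentIn_subset _ _ (hH ?_) (hvis.2 hmem)
  rw [add_sub_cancel_left, real_inner_smul_right]
  exact mul_neg_of_pos_of_neg ht0 hyz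

variable {k : ℕ} {g : Fin k → Pt} (hg : Function.Injective g)
  (hcount : ∀ p ∈ P, k - 1 ≤ (Vis P p ∩ range g).ncard)
include hg hcount

lemma subsingleton_setOf_notMem_vis (hz : z ∈ P) : {i | g i ∉ Vis P z}.Subsingleton := by
  intro i hi j hj
  by_contra hij
  have hsub : Vis P z ∩ range g ⊆ g '' {i, j}ᶜ := by
    rintro _ ⟨hvis, l, rfl⟩
    refine ⟨l, ?_, rfl⟩
    rintro (rfl | rfl)
    exacts [hi hvis, hj hvis]
  have hle := (ncard_le_ncard hsub (toFinite _)).trans_eq (ncard_image_of_injective _ hg)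
  have hsum := ncard_add_ncard_compl ({i, j} : Set (Fin k))
  rw [ncard_pair hij, Nat.card_eq_fintype_card, Fintype.card_fin] at hsum
  have := hcount z hz
  omega

lemma zero_notMem_convexHull_of_forall_isHoleNormal {T : Finset Pt}
    (hT : ∀ m ∈ T, ∃ z, IsHoleNormal P p m z) (hTk : T.card < k) :
    (0 : Pt) ∉ convexHull ℝ (T : Set Pt) := by
  intro h0
  choose F hFT hF using fun j => exists_inner_nonpos_of_zero_mem_convexHull h0 (g j - p)
  obtain ⟨i, -, j, -, hij, hFij⟩ := Finset.exists_ne_map_eq_of_card_lt_of_maps_to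
    (s := Finset.univ) (by simpa using hTk) (fun j _ => hFT j)
  obtain ⟨z, hz⟩ := hT _ (hFT i)
  exact hij (subsingleton_setOf_notMem_vis hg hcount hz.1 (hz.notMem_vis (hF i))
    (hz.notMem_vis (hFij ▸ hF j)))

end Guards

/-- A full circulant polygon `P_k^{k-1}` with `k ≥ 4` has no holes:
the complement `ℝ² \ P` has no bounded connected component. -/
theorem fullCirculant_no_holes (P : Set Pt) (k : ℕ) (hk : 4 ≤ k)
    (g w : Fin k → Pt) (h : IsFullCirculant P k g w) :
    ∀ p : Pt, p ∉ P → ¬ Bornology.IsBounded (connectedComponentIn Pᶜ p) := by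
  intro p hp hb
  obtain ⟨⟨hPc, -, -, E, hfr⟩, hg, -, -, -, -, hcount⟩ := h
  have : Fact (finrank ℝ Pt = 2) := ⟨finrank_euclideanSpace_fin⟩
  obtain ⟨T, hTS, hT3, hT0⟩ := exists_finset_card_le_finrank_succ_of_mem_convexHull
    (zero_mem_convexHull_isHoleNormal (EuclideanSpace.basisFun (Fin 2) ℝ).toBasis.orientation
      hPc.isClosed hfr hp hb)
  rw [finrank_euclideanSpace_fin] at hT3
  exact zero_notMem_convexHull_of_forall_isHoleNormal hg hcount (fun m hm => (hTS hm).2)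
    (by omega) hT0
end

section
/- Let P ⊆ ℝ², let G ⊆ P be a finite set of k ≥ 4 points such that every point w ∈ P satisfies |V(w) ∩ G| ≥ k − 1. Then there do not exist three closed half-planes H₁, H₂, H₃ ⊆ ℝ² with H₁ ∩ H₂ ∩ H₃ = ∅ and three points w₁, w₂, w₃ ∈ P with V(wᵢ) ⊆ Hᵢ for i = 1, 2, 3. -/
/-! Each `wᵢ` sees at least `k - 1` guards, all of them in `Hᵢ`, so each `Hᵢ` misses at most one
guard. Three half-planes thus miss at most three of the `k ≥ 4` guards, and a remaining guard
lies in `H₁ ∩ H₂ ∩ H₃`. -/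

open scoped RealInnerProductSpace

/-- The closed half-plane `{x : ⟨a, x⟩ ≤ b}`. -/
def HalfPlane (a : Pt) (b : ℝ) : Set Pt := {x | ⟪a, x⟫ ≤ b}

namespace Set

variable {α ι : Type*}

theorem exists_mem_forall_mem_of_sum_ncard_sdiff_lt [Fintype ι] {s : Set α} (hs : s.Finite)
    (t : ι → Set α) (h : ∑ i, (s \ t i).ncard < s.ncard) : ∃ x ∈ s, ∀ i, x ∈ t i := by
  by_contra! hout
  have hcover : s ⊆ ⋃ i, s \ t i := fun x hx ↦
    let ⟨i, hi⟩ := hout x hx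
    mem_iUnion.2 ⟨i, hx, hi⟩
  have hfin : (⋃ i, s \ t i).Finite := finite_iUnion fun i ↦ hs.sdiff
  have := (ncard_le_ncard hcover hfin).trans (ncard_iUnion_le_of_fintype _)
  omega

theorem ncard_sdiff_add_ncard_inter_le {s A t : Set α} (hs : s.Finite) (hA : A ⊆ t) :
    (s \ t).ncard + (A ∩ s).ncard ≤ s.ncard := by
  have hsub : A ∩ s ⊆ s ∩ t := fun x hx ↦ ⟨hx.2, hA hx.1⟩
  have := ncard_le_ncard hsub (hs.inter_of_left t)
  have := ncard_inter_add_ncard_sdiff_eq_ncard s t hs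
  omega

end Set

theorem no_three_separating_halfplanes_general (P : Set Pt) (G : Finset Pt) (k : ℕ) (hk : 4 ≤ k)
    (hcard : G.card = k)
    (hcov : ∀ p ∈ P, k - 1 ≤ (Vis P p ∩ ↑G).ncard) :
    ¬ ∃ (a : Fin 3 → Pt) (b : Fin 3 → ℝ) (w : Fin 3 → Pt),
        (∀ i, a i ≠ 0) ∧
        (⋂ i, HalfPlane (a i) (b i)) = ∅ ∧
        (∀ i, w i ∈ P) ∧
        (∀ i, Vis P (w i) ⊆ HalfPlane (a i) (b i)) := by
  rintro ⟨a, b, w, -, hempty, hw, hVis⟩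
  have hG : (G : Set Pt).ncard = k := by rw [Set.ncard_coe_finset, hcard]
  have hmiss (i : Fin 3) : ((G : Set Pt) \ HalfPlane (a i) (b i)).ncard ≤ 1 := by
    have := Set.ncard_sdiff_add_ncard_inter_le G.finite_toSet (hVis i)
    have := hcov (w i) (hw i)
    omega
  have hsum : ∑ i, ((G : Set Pt) \ HalfPlane (a i) (b i)).ncard < (G : Set Pt).ncard :=
    calc ∑ i, ((G : Set Pt) \ HalfPlane (a i) (b i)).ncard
        ≤ ∑ _i : Fin 3, 1 := Finset.sum_le_sum fun i _ ↦ hmiss i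
      _ < (G : Set Pt).ncard := by simp only [Finset.sum_const, Finset.card_univ,
          Fintype.card_fin, smul_eq_mul, mul_one]; omega
  obtain ⟨g, -, hg⟩ := Set.exists_mem_forall_mem_of_sum_ncard_sdiff_lt G.finite_toSet _ hsum
  exact hempty.subset (Set.mem_iInter.2 hg)

/-- If `G ⊆ P` is a set of `k ≥ 4` points such that every point of `P`
sees at least `k - 1` guards of `G`, then there are no three closed half-planes
`H₁, H₂, H₃` with empty common intersection and points `w₁, w₂, w₃ ∈ P` with
`V(wᵢ) ⊆ Hᵢ`. -/
theorem no_three_separating_halfplanes (P : Set Pt) (G : Finset Pt) (k : ℕ) (hk : 4 ≤ k)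
    (hcard : G.card = k) (hG : ↑G ⊆ P)
    (hcov : ∀ p ∈ P, k - 1 ≤ (Vis P p ∩ ↑G).ncard) :
    ¬ ∃ (a : Fin 3 → Pt) (b : Fin 3 → ℝ) (w : Fin 3 → Pt),
        (∀ i, a i ≠ 0) ∧
        (⋂ i, HalfPlane (a i) (b i)) = ∅ ∧
        (∀ i, w i ∈ P) ∧
        (∀ i, Vis P (w i) ⊆ HalfPlane (a i) (b i)) :=
  no_three_separating_halfplanes_general P G k hk hcard hcov
end

section
/- Let P₁ = ⋂_{i=1,…,n} H_i and P₂ = ⋂_{i=n+1,…,n+m} H_i be two disjoint nonempty convex subsets of ℝ², each given as a finite intersection of closed half-planes H₁, …, H_{n+m}. Then some H_i (1 ≤ i ≤ n+m) separates P₁ and P₂: there is an index i such that one of the two sets is contained in H_i and the other is disjoint from H_i. -/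
open scoped RealInnerProductSpace

/-! By Helly's theorem the empty intersection of all the half-planes is already empty for some
three of them. Each of `P₁`, `P₂` is nonempty, so both sides contribute to these three, and
one side contributes a single half-plane; it misses the other polygon. -/

open Finset Module

lemma convex_halfPlane (a : Pt) (b : ℝ) : Convex ℝ (HalfPlane a b) :=
  convex_halfSpace_le (innerₛₗ ℝ a).isLinear b

namespace Convex

variable {ι 𝕜 E : Type*} [Field 𝕜] [LinearOrder 𝕜] [IsStrictOrderedRing 𝕜]
  [AddCommGroup E] [Module 𝕜 E] [FiniteDimensional 𝕜 E] {F : ι → Set E}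

theorem exists_card_le_biInter_eq_empty {s : Finset ι} (h_convex : ∀ i ∈ s, Convex 𝕜 (F i))
    (h_empty : ⋂ i ∈ s, F i = ∅) :
    ∃ I ⊆ s, #I ≤ finrank 𝕜 E + 1 ∧ ⋂ i ∈ I, F i = ∅ := by
  by_contra! h
  simpa [h_empty] using helly_theorem' h_convex h

theorem exists_card_add_card_le_disjoint_biInter [DecidableEq ι] {s t : Finset ι}
    (hs : ∀ i ∈ s, Convex 𝕜 (F i)) (ht : ∀ i ∈ t, Convex 𝕜 (F i))
    (hs_ne : (⋂ i ∈ s, F i).Nonempty) (ht_ne : (⋂ i ∈ t, F i).Nonempty)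
    (h_disj : Disjoint (⋂ i ∈ s, F i) (⋂ i ∈ t, F i)) :
    ∃ s' ⊆ s, ∃ t' ⊆ t, s'.Nonempty ∧ t'.Nonempty ∧ #s' + #t' ≤ finrank 𝕜 E + 1 ∧
      Disjoint (⋂ i ∈ s', F i) (⋂ i ∈ t', F i) := by
  have h_union : ⋂ i ∈ s ∪ t, F i = ∅ := (set_biInter_inter s t F).trans h_disj.inter_eq
  obtain ⟨I, hI, hcard, hI_empty⟩ :=
    exists_card_le_biInter_eq_empty (fun i hi => (mem_union.mp hi).elim (hs i) (ht i)) h_union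
  have hI_split : I = I ∩ s ∪ I \ s := by rw [union_comm, sdiff_union_inter]
  have hdisj' : Disjoint (⋂ i ∈ I ∩ s, F i) (⋂ i ∈ I \ s, F i) := by
    rw [Set.disjoint_iff_inter_eq_empty, ← set_biInter_inter, ← hI_split, hI_empty]
  have ht' : I \ s ⊆ t := sdiff_le_iff.mpr hI
  refine ⟨I ∩ s, inter_subset_right, I \ s, ht', ?_, ?_, ?_, hdisj'⟩
  · refine nonempty_iff_ne_empty.mpr fun h_empty => ht_ne.ne_empty ?_
    rw [h_empty] at hdisj'
    simpa using hdisj'.mono_right (Set.biInter_subset_biInter_left ht')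
  · refine nonempty_iff_ne_empty.mpr fun h_empty => hs_ne.ne_empty ?_
    rw [h_empty] at hdisj'
    simpa using hdisj'.mono_left (Set.biInter_subset_biInter_left inter_subset_right)
  · rwa [← card_union_of_disjoint (disjoint_sdiff_inter I s).symm, ← hI_split]

theorem exists_disjoint_biInter_of_finrank_le_two {s t : Finset ι} (hE : finrank 𝕜 E ≤ 2)
    (hs : ∀ i ∈ s, Convex 𝕜 (F i)) (ht : ∀ i ∈ t, Convex 𝕜 (F i))
    (hs_ne : (⋂ i ∈ s, F i).Nonempty) (ht_ne : (⋂ i ∈ t, F i).Nonempty)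
    (h_disj : Disjoint (⋂ i ∈ s, F i) (⋂ i ∈ t, F i)) :
    (∃ j ∈ s, Disjoint (F j) (⋂ i ∈ t, F i)) ∨ (∃ j ∈ t, Disjoint (⋂ i ∈ s, F i) (F j)) := by
  classical
  obtain ⟨s', hs', t', ht', hs'_ne, ht'_ne, hcard, hdisj'⟩ :=
    exists_card_add_card_le_disjoint_biInter hs ht hs_ne ht_ne h_disj
  have hs'_pos := hs'_ne.card_pos
  have ht'_pos := ht'_ne.card_pos
  obtain hs'_one | ht'_one : #s' = 1 ∨ #t' = 1 := by omega
  · obtain ⟨j, rfl⟩ := card_eq_one.mp hs'_one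
    refine .inl ⟨j, hs' (mem_singleton_self j), ?_⟩
    simpa using hdisj'.mono_right (Set.biInter_subset_biInter_left ht')
  · obtain ⟨j, rfl⟩ := card_eq_one.mp ht'_one
    refine .inr ⟨j, ht' (mem_singleton_self j), ?_⟩
    simpa using hdisj'.mono_left (Set.biInter_subset_biInter_left hs')

end Convex

theorem halfplane_separation_general (n m : ℕ) (a : Fin (n + m) → Pt) (b : Fin (n + m) → ℝ)
    (P₁ P₂ : Set Pt)
    (hP₁ : P₁ = ⋂ i ∈ {i : Fin (n + m) | (i : ℕ) < n}, HalfPlane (a i) (b i))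
    (hP₂ : P₂ = ⋂ i ∈ {i : Fin (n + m) | n ≤ (i : ℕ)}, HalfPlane (a i) (b i))
    (h₁ : P₁.Nonempty) (h₂ : P₂.Nonempty) (hdisj : Disjoint P₁ P₂) :
    ∃ i : Fin (n + m),
      ((i : ℕ) < n ∧ P₂ ∩ HalfPlane (a i) (b i) = ∅) ∨
      (n ≤ (i : ℕ) ∧ P₁ ∩ HalfPlane (a i) (b i) = ∅) := by
  subst hP₁ hP₂
  simp only [← coe_filter_univ, set_biInter_coe, ← Set.disjoint_iff_inter_eq_empty] at *
  rcases Convex.exists_disjoint_biInter_of_finrank_le_two finrank_euclideanSpace_fin.le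
      (fun i _ => convex_halfPlane (a i) (b i)) (fun i _ => convex_halfPlane (a i) (b i))
      h₁ h₂ hdisj with ⟨j, hj, hj_disj⟩ | ⟨j, hj, hj_disj⟩
  · exact ⟨j, .inl ⟨(mem_filter.mp hj).2, hj_disj.symm⟩⟩
  · exact ⟨j, .inr ⟨(mem_filter.mp hj).2, hj_disj⟩⟩

/-- Let `P₁ = ⋂_{i < n} H i` and `P₂ = ⋂_{n ≤ i < n+m} H i` be two
disjoint nonempty (convex) subsets of the plane, each a finite intersection of closed
half-planes.  Then one of the half-planes separates them: some `H i` with `i < n` is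
disjoint from `P₂`, or some `H i` with `n ≤ i` is disjoint from `P₁`. -/
theorem halfplane_separation (n m : ℕ) (a : Fin (n + m) → Pt) (b : Fin (n + m) → ℝ)
    (ha : ∀ i, a i ≠ 0) (P₁ P₂ : Set Pt)
    (hP₁ : P₁ = ⋂ i ∈ {i : Fin (n + m) | (i : ℕ) < n}, HalfPlane (a i) (b i))
    (hP₂ : P₂ = ⋂ i ∈ {i : Fin (n + m) | n ≤ (i : ℕ)}, HalfPlane (a i) (b i))
    (h₁ : P₁.Nonempty) (h₂ : P₂.Nonempty) (hdisj : Disjoint P₁ P₂) :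
    ∃ i : Fin (n + m),
      ((i : ℕ) < n ∧ P₂ ∩ HalfPlane (a i) (b i) = ∅) ∨
      (n ≤ (i : ℕ) ∧ P₁ ∩ HalfPlane (a i) (b i) = ∅) :=
  halfplane_separation_general n m a b P₁ P₂ hP₁ hP₂ h₁ h₂ hdisj
end

section
/- Every full circulant polygon P_k^{k−1} with k ≥ 4 is star-shaped: there exists a point c ∈ P such that every point of P is visible from c, i.e., P ⊆ V(c) (equivalently, for every q ∈ P the segment from c to q lies in P). -/
/-!
Each point of `P` misses at most one of the `k ≥ 4` guards, so any three points of `P` see a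
common guard, and Krasnosel'skii's theorem makes `P` star-shaped.

For Krasnosel'skii's theorem, Helly's theorem yields a point `c` in the closed convex hull of
every visibility region `V(x)`. If `y` is a point of `P` nearest to some `q`, then `V(y)`, hence
`c`, lies in the half-plane `⟪· - y, q - y⟫ ≤ 0`. This makes `t ↦ d(c + t • (z - c), P) / t`
nonincreasing up to an error quadratic in the step, so for `z ∈ P` it vanishes on `(0, 1]`
because it vanishes at `t = 1`.
-/

open Metric Set Filter Topology Finset Function
open scoped InnerProductSpace

lemma le_of_forall_le_add_mul_sq {f : ℝ → ℝ} {a b C : ℝ} (hab : a ≤ b)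
    (hf : ∀ t s, a ≤ t → t < s → s ≤ b → f t ≤ f s + C * (s - t) ^ 2) : f a ≤ f b := by
  rcases hab.eq_or_lt with rfl | hab
  · rfl
  have bound : ∀ n : ℕ, f a - f b ≤ C * (b - a) ^ 2 * (1 / ((n : ℝ) + 1)) := by
    intro n
    set Δ := (b - a) / ((n : ℝ) + 1)
    have hΔ : 0 < Δ := by positivity
    have hnΔ : ((n : ℝ) + 1) * Δ = b - a := mul_div_cancel₀ _ (by positivity)
    have hstep : ∀ i ∈ range (n + 1),
        f (a + i * Δ) - f (a + (i + 1 : ℕ) * Δ) ≤ C * Δ ^ 2 := by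
      intro i hi
      have hi : (i : ℝ) + 1 ≤ n + 1 := by exact_mod_cast mem_range.1 hi
      have := hf (a + i * Δ) (a + (i + 1 : ℕ) * Δ)
        (by nlinarith [(Nat.cast_nonneg i : (0 : ℝ) ≤ i)]) (by push_cast; linarith)
        (by push_cast; nlinarith)
      push_cast at this ⊢
      linarith [show a + ((i : ℝ) + 1) * Δ - (a + i * Δ) = Δ by ring]
    calc f a - f b = ∑ i ∈ range (n + 1), (f (a + i * Δ) - f (a + (i + 1 : ℕ) * Δ)) := by
          rw [sum_range_sub']; push_cast; congr 2 <;> [simp; linarith]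
      _ ≤ ∑ _i ∈ range (n + 1), C * Δ ^ 2 := sum_le_sum hstep
      _ = C * (b - a) ^ 2 * (1 / ((n : ℝ) + 1)) := by
          rw [sum_const, card_range, nsmul_eq_mul, ← hnΔ]; push_cast; field_simp
  have hlim : Tendsto (fun n : ℕ => C * (b - a) ^ 2 * (1 / ((n : ℝ) + 1))) atTop (𝓝 0) := by
    simpa using tendsto_one_div_add_atTop_nhds_zero_nat.const_mul (C * (b - a) ^ 2)
  linarith [ge_of_tendsto' hlim bound]

section InnerProductSpace

variable {E : Type*} [NormedAddCommGroup E] [InnerProductSpace ℝ E] {S : Set E} {c : E}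

lemma inner_sub_nonpos_of_segment_subset {q y v : E}
    (hy : ∀ u ∈ S, dist q y ≤ dist q u) (hv : segment ℝ y v ⊆ S) :
    ⟪v - y, q - y⟫_ℝ ≤ 0 := by
  have hyv : y ∈ segment ℝ y v := left_mem_segment ℝ y v
  have : Nonempty (segment ℝ y v) := ⟨⟨y, hyv⟩⟩
  have hmin : ‖q - y‖ = ⨅ w : segment ℝ y v, ‖q - w‖ := by
    refine le_antisymm (le_ciInf fun w => ?_)
      (ciInf_le (f := fun w : segment ℝ y v => ‖q - w‖) ⟨0, ?_⟩ ⟨y, hyv⟩)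
    · simpa only [dist_eq_norm] using hy w (hv w.2)
    · rintro _ ⟨w, rfl⟩
      exact norm_nonneg _
  rw [real_inner_comm]
  exact (norm_eq_iInf_iff_real_inner_le_zero (convex_segment y v) hyv).1
    hmin v (right_mem_segment ℝ y v)

lemma norm_add_smul_sub_sub_sq_le {q y : E} (h : ⟪c - y, q - y⟫_ℝ ≤ 0) {θ : ℝ}
    (hθ₀ : 0 ≤ θ) (hθ₁ : θ ≤ 1) :
    ‖c + θ • (q - c) - y‖ ^ 2 ≤ θ ^ 2 * ‖q - y‖ ^ 2 + (1 - θ) ^ 2 * ‖q - c‖ ^ 2 := by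
  have hp : c + θ • (q - c) - y = θ • (q - y) + (1 - θ) • (c - y) := by module
  have hq : q - c = (q - y) - (c - y) := by abel
  rw [hp, hq, real_inner_comm] at *
  generalize q - y = a at *
  generalize c - y = b at *
  rw [norm_add_sq_real, norm_sub_sq_real, norm_smul, norm_smul, real_inner_smul_left,
    real_inner_smul_right, Real.norm_of_nonneg hθ₀,
    Real.norm_of_nonneg (sub_nonneg.2 hθ₁)]
  nlinarith [mul_nonneg hθ₀ (sub_nonneg.2 hθ₁), mul_nonneg (sub_nonneg.2 hθ₁) (sub_nonneg.2 hθ₁)]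

lemma infDist_sq_div_sq_le (hS : IsCompact S) (hne : S.Nonempty)
    (hc : ∀ q, ∀ y ∈ S, (∀ u ∈ S, dist q y ≤ dist q u) → ⟪c - y, q - y⟫_ℝ ≤ 0)
    (u : E) {t s : ℝ} (ht : 0 < t) (hts : t ≤ s) :
    infDist (c + t • u) S ^ 2 / t ^ 2
      ≤ infDist (c + s • u) S ^ 2 / s ^ 2 + ‖u‖ ^ 2 / t ^ 2 * (s - t) ^ 2 := by
  have hs : 0 < s := ht.trans_le hts
  obtain ⟨y, hyS, hy⟩ := hS.exists_infDist_eq_dist hne (c + s • u)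
  have hnear : ∀ v ∈ S, dist (c + s • u) y ≤ dist (c + s • u) v :=
    fun v hv => hy ▸ infDist_le_dist_of_mem hv
  have hθ : c + (t / s) • (c + s • u - c) = c + t • u := by
    rw [add_sub_cancel_left, smul_smul, div_mul_cancel₀ _ hs.ne']
  have key := norm_add_smul_sub_sub_sq_le (hc _ y hyS hnear) (div_nonneg ht.le hs.le)
    ((div_le_one hs).2 hts)
  rw [hθ, add_sub_cancel_left, norm_smul, Real.norm_of_nonneg hs.le,
    ← dist_eq_norm, ← dist_eq_norm, ← hy] at key
  have hle : infDist (c + t • u) S ^ 2 ≤ dist (c + t • u) y ^ 2 :=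
    pow_le_pow_left₀ infDist_nonneg (infDist_le_dist_of_mem hyS) 2
  rw [div_le_iff₀ (by positivity)]
  calc infDist (c + t • u) S ^ 2 ≤ (t / s) ^ 2 * infDist (c + s • u) S ^ 2
          + (1 - t / s) ^ 2 * (s * ‖u‖) ^ 2 := hle.trans key
    _ = _ := by field_simp

lemma starConvex_of_forall_inner_sub_nonpos (hS : IsCompact S)
    (hc : ∀ q, ∀ y ∈ S, (∀ u ∈ S, dist q y ≤ dist q u) → ⟪c - y, q - y⟫_ℝ ≤ 0) :
    StarConvex ℝ c S := by
  rcases S.eq_empty_or_nonempty with rfl | hne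
  · exact starConvex_empty c
  refine starConvex_iff_segment_subset.2 fun z hz => ?_
  rw [segment_eq_image']
  rintro _ ⟨t, ⟨ht₀, ht₁⟩, rfl⟩
  dsimp only
  rcases ht₀.eq_or_lt with rfl | ht₀
  · obtain ⟨y, hyS, hy⟩ := hS.exists_infDist_eq_dist hne c
    have hcy := hc c y hyS fun v hv => hy ▸ infDist_le_dist_of_mem hv
    rwa [zero_smul, add_zero, sub_eq_zero.1 (real_inner_self_nonpos.1 hcy)]
  set f : ℝ → ℝ := fun s => infDist (c + s • (z - c)) S ^ 2 / s ^ 2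
  have hmono : f t ≤ f 1 :=
    le_of_forall_le_add_mul_sq (C := ‖z - c‖ ^ 2 / t ^ 2) ht₁ fun t' s ht' hs _ =>
      (infDist_sq_div_sq_le hS hne hc _ (ht₀.trans_le ht') hs.le).trans (by gcongr)
  have hf1 : f 1 = 0 := by simp [f, infDist_zero_of_mem hz]
  rw [hS.isClosed.mem_iff_infDist_zero hne]
  have : infDist (c + t • (z - c)) S ^ 2 / t ^ 2 ≤ 0 := hf1 ▸ hmono
  simpa [ht₀.ne'] using le_antisymm this (by positivity)

end InnerProductSpace

lemma inner_sub_nonpos_of_mem_closure_convexHull_vis {S : Set Pt} {q y v : Pt}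
    (hy : ∀ u ∈ S, dist q y ≤ dist q u) (hv : v ∈ closure (convexHull ℝ (Vis S y))) :
    ⟪v - y, q - y⟫_ℝ ≤ 0 := by
  have hconv : Convex ℝ {v : Pt | ⟪v - y, q - y⟫_ℝ ≤ 0} := by
    simp only [inner_sub_left, sub_nonpos]
    exact convex_halfSpace_le
      ⟨fun a b => inner_add_left a b _, fun r a => real_inner_smul_left a _ r⟩ _
  have hclosed : IsClosed {v : Pt | ⟪v - y, q - y⟫_ℝ ≤ 0} :=
    isClosed_le (by fun_prop) continuous_const
  exact closure_minimal (convexHull_min (fun v hv => inner_sub_nonpos_of_segment_subset hy hv.2)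
    hconv) hclosed hv

theorem exists_starConvex_of_forall_card_le_three {S : Set Pt} (hS : IsCompact S)
    (h3 : ∀ I : Finset Pt, ↑I ⊆ S → #I ≤ 3 → ∃ c, ∀ x ∈ I, c ∈ Vis S x) :
    ∃ c, StarConvex ℝ c S := by
  set F : S → Set Pt := fun x => closure (convexHull ℝ (Vis S x))
  have hF : ∀ I : Finset S, #I ≤ Module.finrank ℝ Pt + 1 → (⋂ x ∈ I, F x).Nonempty := by
    intro I hI
    rw [finrank_euclideanSpace_fin] at hI
    obtain ⟨c, hc⟩ := h3 (I.map (Embedding.subtype _)) (by simp) (by simpa using hI)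
    exact ⟨c, mem_iInter₂.2 fun x hx =>
      subset_closure (subset_convexHull ℝ _ (hc x (mem_map_of_mem _ hx)))⟩
  obtain ⟨c, hc⟩ := Convex.helly_theorem_compact' (F := F)
    (fun x => (convex_convexHull ℝ _).closure)
    (fun x => (isBounded_convexHull.2 (hS.isBounded.subset fun _ hq => hq.1)).isCompact_closure)
    hF
  refine ⟨c, starConvex_of_forall_inner_sub_nonpos hS fun q y hy hnear => ?_⟩
  exact inner_sub_nonpos_of_mem_closure_convexHull_vis hnear (mem_iInter.1 hc ⟨y, hy⟩)

lemma exists_forall_mem_of_le_ncard_inter_range {α ι : Type*} {k : ℕ} {g : Fin k → α}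
    (hg : Injective g) (A : ι → Set α) (I : Finset ι)
    (hA : ∀ i ∈ I, k - 1 ≤ (A i ∩ range g).ncard) (hI : #I < k) :
    ∃ j, ∀ i ∈ I, g j ∈ A i := by
  have hmiss : ∀ i ∈ I, (g ⁻¹' A i)ᶜ.ncard ≤ 1 := by
    intro i hi
    have hsplit := ncard_add_ncard_compl (g ⁻¹' A i)
    rw [← ncard_image_of_injective _ hg, image_preimage_eq_inter_range, Nat.card_eq_fintype_card,
      Fintype.card_fin] at hsplit
    have := hA i hi
    omega
  by_contra! h
  have hcover : (univ : Set (Fin k)) ⊆ ⋃ i ∈ I, (g ⁻¹' A i)ᶜ := fun j _ => by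
    obtain ⟨i, hi, hj⟩ := h j
    exact mem_iUnion₂.2 ⟨i, hi, hj⟩
  have hcard := (ncard_le_ncard hcover).trans (I.set_ncard_biUnion_le _)
  rw [ncard_univ, Nat.card_eq_fintype_card, Fintype.card_fin] at hcard
  have hsum := sum_le_sum hmiss
  simp only [sum_const, smul_eq_mul, mul_one] at hsum
  omega

/-- Every full circulant polygon `P_k^{k-1}` with `k ≥ 4` is
star-shaped: there is a point `c ∈ P` seeing all of `P`. -/
theorem fullCirculant_starShaped (P : Set Pt) (k : ℕ) (hk : 4 ≤ k)
    (g w : Fin k → Pt) (h : IsFullCirculant P k g w) :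
    ∃ c ∈ P, ∀ q ∈ P, segment ℝ c q ⊆ P := by
  obtain ⟨⟨hcomp, -, -, -⟩, hginj, -, hgP, -, -, hsee⟩ := h
  obtain ⟨c, hc⟩ := exists_starConvex_of_forall_card_le_three hcomp fun I hIP hI => by
    obtain ⟨j, hj⟩ := exists_forall_mem_of_le_ncard_inter_range hginj (Vis P) I
      (fun x hx => hsee x (hIP hx)) (by omega)
    exact ⟨g j, hj⟩
  exact ⟨c, hc.mem ⟨_, hgP ⟨0, by omega⟩⟩, starConvex_iff_segment_subset.1 hc⟩
end

section
/- Let P ⊆ ℝ², let G, W ⊆ P be finite with conv(AGP(G,W)) full-dimensional, and let W̄ = {w_1, …, w_k} ⊆ W with k ≥ 3 odd, such that: (1) no guard in G sees more than two witnesses of W̄; (2) whenever a guard in G sees two witnesses w_i ≠ w_j ∈ W̄, they are a successive pair, i.e., j = i+1, or i = 1 and j = k; (3) each of the k successive pairs is seen by some g ∈ G (a single guard seeing both); and (4) no guard in G ∩ V(W̄) sees a witness of W outside of W̄. Then the inequality ∑_{g ∈ V(W̄) ∩ G} x_g ≥ ⌈k/2⌉ is a facet of conv(AGP(G,W)). 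-/
/-!
Validity: every witness of `W̄` is covered by a chosen guard in `V(W̄)`, and a guard sees at most
two witnesses of `W̄`, so at least `⌈k/2⌉` guards of `V(W̄)` are chosen.

Dimension: pick guards `c i` seeing `w i` and `w (i+1)`; they are distinct since no guard sees three
witnesses of `W̄`. As `k` is odd, the `⌈k/2⌉` guards `c i, c (i+2), …, c (i+k-1)` cover `W̄`, and
together with guards outside `V(W̄)` covering `W \ W̄` they give feasible points on the face.
Full-dimensionality gives, for every guard `g`, a feasible point with `x_g = 0`; by (4) its guards
covering `W \ W̄` lie outside `V(W̄)`, so for `g ∉ V(W̄)` both the outer cover with and without `g`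
give face points, and `e_g` lies in the direction of the face. For `g ∈ V(W̄)` seeing `w i`,
replacing `c i` by `g` in the cover starting at `i + 1` gives `e_g - e_(c i)`, and with `g = c n`,
`i = n + 1` this links consecutive edge guards. Hence the direction of the face is the whole
hyperplane `∑_{g ∈ V(W̄)} v_g = 0`.
-/

open scoped Classical

/-- `a ⬝ x ≥ b` is a facet of `conv F ⊆ ℝ^G`: it is valid for all feasible solutions,
and the face where it holds with equality has affine dimension `|G| - 1`. -/
def IsFacet (G : Finset Pt) (F : Set (↥G → ℝ)) (a : ↥G → ℝ) (b : ℝ) : Prop :=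
  (∀ x ∈ F, b ≤ ∑ g : ↥G, a g * x g) ∧
  Module.finrank ℝ
      (affineSpan ℝ {x | x ∈ convexHull ℝ F ∧ ∑ g : ↥G, a g * x g = b}).direction
    = G.card - 1

/-- Indices `i, j` (0-indexed in `Fin k`) form a successive pair of
`W̄ = {w 0, …, w (k-1)}`: the pairs `{i, i+1}` for `i < k - 1` together with
`{k-1, 0}`. -/
def Successive (k : ℕ) (i j : Fin k) : Prop :=
  (j : ℕ) = (i : ℕ) + 1 ∨ (i : ℕ) = (j : ℕ) + 1 ∨
  ((i : ℕ) = k - 1 ∧ (j : ℕ) = 0) ∨ ((j : ℕ) = k - 1 ∧ (i : ℕ) = 0)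

open Finset Function

lemma mem_vis_comm {P : Set Pt} {p q : Pt} : q ∈ Vis P p ↔ p ∈ Vis P q := by
  constructor <;> rintro ⟨-, h⟩ <;> exact ⟨h (left_mem_segment ℝ _ _), by rwa [segment_symm]⟩

section Facet

variable {ι : Type*}

lemma exists_apply_ne_of_affineSpan_eq_top {S : Set (ι → ℝ)} (h : affineSpan ℝ S = ⊤)
    (g : ι) (c : ℝ) : ∃ x ∈ S, x g ≠ c := by
  by_contra! hS
  have hker : vectorSpan ℝ S ≤ LinearMap.ker (LinearMap.proj g) :=
    Submodule.span_le.2 (by rintro _ ⟨x, hx, y, hy, rfl⟩; simp [hS x hx, hS y hy])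
  rw [← direction_affineSpan, h, AffineSubspace.direction_top] at hker
  simpa using hker (Submodule.mem_top (x := Pi.single g 1))

variable [Fintype ι]

def face (F : Set (ι → ℝ)) (a : ι → ℝ) (b : ℝ) : Set (ι → ℝ) :=
  {x | x ∈ convexHull ℝ F ∧ a ⬝ᵥ x = b}

lemma dotProduct_eq_zero_of_mem_direction {F : Set (ι → ℝ)} {a : ι → ℝ} {b : ℝ} {v : ι → ℝ}
    (hv : v ∈ (affineSpan ℝ (face F a b)).direction) : a ⬝ᵥ v = 0 := by
  rw [direction_affineSpan] at hv
  refine (Submodule.span_le (p := LinearMap.ker (dotProductEquiv ℝ ι a))).2 ?_ hv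
  rintro _ ⟨x, hx, y, hy, rfl⟩
  simp [dotProduct_sub, hx.2, hy.2]

theorem isFacet_of_ker_le_direction {G : Finset Pt} {F : Set (↥G → ℝ)} {a : ↥G → ℝ} {b : ℝ}
    (ha : a ≠ 0) (hvalid : ∀ x ∈ F, b ≤ a ⬝ᵥ x)
    (hker : ∀ v, a ⬝ᵥ v = 0 → v ∈ (affineSpan ℝ (face F a b)).direction) :
    IsFacet G F a b := by
  refine ⟨hvalid, ?_⟩
  have hD : (affineSpan ℝ (face F a b)).direction = LinearMap.ker (dotProductEquiv ℝ _ a) :=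
    le_antisymm (fun v hv => dotProduct_eq_zero_of_mem_direction hv) fun v hv => hker v hv
  have := Module.Dual.finrank_ker_add_one_of_ne_zero
    ((LinearEquiv.map_ne_zero_iff (dotProductEquiv ℝ ↥G)).2 ha)
  rw [Module.finrank_fintype_fun_eq_card, Fintype.card_coe] at this
  change Module.finrank ℝ (affineSpan ℝ (face F a b)).direction = _
  rw [hD]
  omega

lemma mem_of_indicator_dotProduct_eq_zero [DecidableEq ι] {D : Submodule ℝ (ι → ℝ)}
    {p : ι → Prop} [DecidablePred p] (g₀ : ι) (hout : ∀ g, ¬ p g → Pi.single g 1 ∈ D)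
    (hin : ∀ g, p g → Pi.single g 1 - Pi.single g₀ 1 ∈ D) {v : ι → ℝ}
    (hv : (fun g => if p g then (1 : ℝ) else 0) ⬝ᵥ v = 0) : v ∈ D := by
  have hv' : ∑ g, (if p g then v g else 0) = 0 := by simpa [dotProduct] using hv
  have hdecomp :
      v = ∑ g, v g • (if p g then Pi.single g 1 - Pi.single g₀ 1 else Pi.single g 1) :=
    calc v = ∑ g, Pi.single g (v g) - (∑ g, (if p g then v g else 0)) • Pi.single g₀ 1 := by
          rw [univ_sum_single, hv', zero_smul, sub_zero]
      _ = _ := by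
          rw [sum_smul, ← sum_sub_distrib]
          refine sum_congr rfl fun g _ => ?_
          split_ifs <;> simp [smul_sub, ← Pi.single_smul]
  rw [hdecomp]
  refine D.sum_mem fun g _ => D.smul_mem _ ?_
  split_ifs with hg
  exacts [hin g hg, hout g hg]

end Facet

section IndicatorVec

variable {ι : Type*} [DecidableEq ι]

def indicatorVec (s : Finset ι) : ι → ℝ := ∑ g ∈ s, Pi.single g 1

lemma indicatorVec_apply (s : Finset ι) (g : ι) :
    indicatorVec s g = if g ∈ s then 1 else 0 := by
  simp [indicatorVec, Finset.sum_apply]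

lemma dotProduct_indicatorVec [Fintype ι] (a : ι → ℝ) (s : Finset ι) :
    a ⬝ᵥ indicatorVec s = ∑ g ∈ s, a g := by
  simp [indicatorVec, dotProduct_sum, dotProduct_single]

end IndicatorVec

section AltIndices

open Fin.CommRing

variable {k : ℕ} [NeZero k]

lemma add_one_ne_self (hk : 1 < k) (i : Fin k) : i + 1 ≠ i := by
  intro h
  have h1 : ((1 : ℕ) : Fin k) = 0 := by push_cast; linear_combination h
  rw [CharP.cast_eq_zero_iff (Fin k) k] at h1
  exact absurd (Nat.le_of_dvd one_pos h1) (by omega)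

lemma add_one_add_one_ne_self (hk : 2 < k) (i : Fin k) : i + 1 + 1 ≠ i := by
  intro h
  have h2 : ((2 : ℕ) : Fin k) = 0 := by push_cast; linear_combination h
  rw [CharP.cast_eq_zero_iff (Fin k) k] at h2
  exact absurd (Nat.le_of_dvd two_pos h2) (by omega)

def altIndices (i : Fin k) : Finset (Fin k) :=
  (range ((k + 1) / 2)).image fun t => i + ((2 * t : ℕ) : Fin k)

lemma card_altIndices (i : Fin k) : #(altIndices i) = (k + 1) / 2 := by
  rw [altIndices, card_image_of_injOn, card_range]
  intro s hs t ht hst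
  simp only [coe_range, Set.mem_Iio] at hs ht
  have := ((CharP.natCast_eq_natCast (Fin k) k).1 (add_left_cancel hst))
  have := Nat.ModEq.eq_of_lt_of_lt this (by omega) (by omega)
  omega

lemma exists_mem_altIndices (n m : Fin k) : ∃ j ∈ altIndices n, m = j ∨ m = j + 1 := by
  obtain ⟨t, ht | ht⟩ := Nat.even_or_odd' (m - n).val
  · refine ⟨m, mem_image.2 ⟨t, mem_range.2 ?_, ?_⟩, Or.inl rfl⟩
    · have := (m - n).isLt; omega
    · rw [← ht, Fin.cast_val_eq_self, add_sub_cancel]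
  · refine ⟨m - 1, mem_image.2 ⟨t, mem_range.2 ?_, ?_⟩, Or.inr (sub_add_cancel m 1).symm⟩
    · have := (m - n).isLt; omega
    · have h := congrArg (fun d : ℕ => (d : Fin k)) ht
      simp only [Fin.cast_val_eq_self] at h
      push_cast at h ⊢
      linear_combination -h

lemma mem_altIndices_add_one (hodd : Odd k) (i : Fin k) : i ∈ altIndices (i + 1) := by
  obtain ⟨r, rfl⟩ := hodd
  refine mem_image.2 ⟨r, mem_range.2 (by omega), ?_⟩
  have : ((2 * r : ℕ) : Fin (2 * r + 1)) + 1 = 0 := by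
    exact_mod_cast CharP.cast_eq_zero (Fin (2 * r + 1)) (2 * r + 1)
  rw [add_assoc, add_comm 1, this, add_zero]

lemma notMem_altIndices_add_one_add_one (hodd : Odd k) (hk : 1 < k) (i : Fin k) :
    i ∉ altIndices (i + 1 + 1) := by
  simp only [altIndices, mem_image, mem_range, not_exists, not_and]
  intro t ht h
  have h0 : ((2 * t + 2 : ℕ) : Fin k) = 0 := by
    push_cast at h ⊢; linear_combination h
  rw [CharP.cast_eq_zero_iff (Fin k) k] at h0
  have := Nat.eq_of_dvd_of_lt_two_mul (by omega) h0 (by omega)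
  obtain ⟨r, rfl⟩ := hodd
  omega

lemma exists_mem_altIndices_add_one_ne (hk : 1 < k) {i m : Fin k} (hm : m ≠ i) :
    ∃ j ∈ altIndices (i + 1), j ≠ i ∧ (m = j ∨ m = j + 1) := by
  obtain ⟨j, hj, hmj⟩ := exists_mem_altIndices (i + 1) m
  by_cases hji : j = i
  · subst hji
    refine ⟨j + 1, mem_image.2 ⟨0, mem_range.2 (by omega), by simp⟩, ?_, ?_⟩
    · exact add_one_ne_self hk j
    · exact Or.inl (hmj.resolve_left hm)
  · exact ⟨j, hj, hji, hmj⟩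

end AltIndices

section Covers

variable {P : Set Pt} {G W : Finset Pt} {k : ℕ} {w : Fin k → Pt}

noncomputable def cycleCoeff (P : Set Pt) (G : Finset Pt) (w : Fin k → Pt) : ↥G → ℝ :=
  fun g => if (g : Pt) ∈ ⋃ i, Vis P (w i) then 1 else 0

def cycleFace (P : Set Pt) (G W : Finset Pt) (w : Fin k → Pt) : Set (↥G → ℝ) :=
  face (Feasible P G W) (cycleCoeff P G w) ((k + 1) / 2 : ℕ)

def IsTightCycleCover (P : Set Pt) (w : Fin k → Pt) (T : Finset ↥G) : Prop :=
  (∀ g ∈ T, (g : Pt) ∈ ⋃ i, Vis P (w i)) ∧ #T = (k + 1) / 2 ∧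
    ∀ m, ∃ g ∈ T, (g : Pt) ∈ Vis P (w m)

def IsOuterCover (P : Set Pt) (W : Finset Pt) (w : Fin k → Pt) (S : Finset ↥G) : Prop :=
  (∀ g ∈ S, (g : Pt) ∉ ⋃ i, Vis P (w i)) ∧
    ∀ w' ∈ W, w' ∉ Set.range w → ∃ g ∈ S, (g : Pt) ∈ Vis P w'

lemma card_filter_mem_vis_le_two (hwinj : Injective w)
    (h1 : ∀ g ∈ G, (Vis P g ∩ Set.range w).ncard ≤ 2) (g : ↥G) :
    #{m | (g : Pt) ∈ Vis P (w m)} ≤ 2 :=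
  calc #{m | (g : Pt) ∈ Vis P (w m)}
      = (({m | (g : Pt) ∈ Vis P (w m)} : Finset (Fin k)).image w : Set Pt).ncard := by
        rw [Set.ncard_coe_finset, card_image_of_injective _ hwinj]
    _ ≤ (Vis P g ∩ Set.range w).ncard := by
        refine Set.ncard_le_ncard ?_ ((Set.finite_range w).inter_of_right _)
        intro q hq
        simp only [coe_image, coe_filter, mem_univ, true_and, Set.mem_image] at hq
        obtain ⟨m, hm, rfl⟩ := hq
        exact ⟨mem_vis_comm.1 hm, m, rfl⟩
    _ ≤ 2 := h1 g g.2

lemma cast_le_dotProduct_of_mem_feasible (hwinj : Injective w) (hwW : Set.range w ⊆ ↑W)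
    (h1 : ∀ g ∈ G, (Vis P g ∩ Set.range w).ncard ≤ 2) {x : ↥G → ℝ}
    (hx : x ∈ Feasible P G W) : (((k + 1) / 2 : ℕ) : ℝ) ≤ cycleCoeff P G w ⬝ᵥ x := by
  obtain ⟨hx01, hxcov⟩ := hx
  choose f hfvis hf1 using fun m => hxcov (w m) (hwW ⟨m, rfl⟩)
  have hk : k ≤ 2 * #(univ.image f) := by
    simpa using card_le_mul_card_image univ 2 fun g _ =>
      (card_le_card fun m hm => by simpa [← (mem_filter.1 hm).2] using hfvis m).trans
        (card_filter_mem_vis_le_two hwinj h1 g)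
  calc (((k + 1) / 2 : ℕ) : ℝ) ≤ #(univ.image f) := by exact_mod_cast (by omega)
    _ = ∑ g ∈ univ.image f, cycleCoeff P G w g * x g := by
        rw [card_eq_sum_ones, Nat.cast_sum]
        refine sum_congr rfl fun g hg => ?_
        obtain ⟨m, -, rfl⟩ := mem_image.1 hg
        simpa [cycleCoeff, hf1 m] using ⟨m, hfvis m⟩
    _ ≤ cycleCoeff P G w ⬝ᵥ x := by
        refine sum_le_sum_of_subset_of_nonneg (subset_univ _) fun g _ _ => ?_
        exact mul_nonneg (by unfold cycleCoeff; split_ifs <;> norm_num)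
          (by rcases hx01 g with h | h <;> simp [h])

lemma indicatorVec_add_mem_cycleFace {T S : Finset ↥G} (hT : IsTightCycleCover P w T)
    (hS : IsOuterCover P W w S) : indicatorVec T + indicatorVec S ∈ cycleFace P G W w := by
  obtain ⟨hTU, hTcard, hTcov⟩ := hT
  obtain ⟨hSU, hScov⟩ := hS
  have hdisj : Disjoint T S := disjoint_left.2 fun g hgT hgS => hSU g hgS (hTU g hgT)
  rw [indicatorVec, indicatorVec, ← sum_union hdisj, ← indicatorVec]
  refine ⟨subset_convexHull ℝ _ ⟨fun g => ?_, fun w' hw' => ?_⟩, ?_⟩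
  · rw [indicatorVec_apply]; split_ifs <;> simp
  · have hsee : ∃ g ∈ T ∪ S, (g : Pt) ∈ Vis P w' := by
      by_cases hw'r : w' ∈ Set.range w
      · obtain ⟨m, rfl⟩ := hw'r
        obtain ⟨g, hg, hgv⟩ := hTcov m
        exact ⟨g, mem_union_left _ hg, hgv⟩
      · obtain ⟨g, hg, hgv⟩ := hScov w' hw' hw'r
        exact ⟨g, mem_union_right _ hg, hgv⟩
    obtain ⟨g, hg, hgv⟩ := hsee
    exact ⟨g, hgv, by simp [indicatorVec_apply, hg]⟩
  · rw [dotProduct_indicatorVec, sum_union hdisj, ← hTcard, card_eq_sum_ones, Nat.cast_sum]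
    simp only [cycleCoeff]
    rw [sum_congr rfl fun g hg => if_pos (hTU g hg), sum_congr rfl fun g hg => if_neg (hSU g hg)]
    simp

lemma indicatorVec_sub_mem_direction {T T' S S' : Finset ↥G} (hT : IsTightCycleCover P w T)
    (hT' : IsTightCycleCover P w T') (hS : IsOuterCover P W w S) (hS' : IsOuterCover P W w S') :
    indicatorVec T + indicatorVec S - (indicatorVec T' + indicatorVec S') ∈
      (affineSpan ℝ (cycleFace P G W w)).direction :=
  AffineSubspace.vsub_mem_direction
    (subset_affineSpan ℝ _ (indicatorVec_add_mem_cycleFace hT hS))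
    (subset_affineSpan ℝ _ (indicatorVec_add_mem_cycleFace hT' hS'))

lemma single_mem_direction {T S : Finset ↥G} {g : ↥G} (hT : IsTightCycleCover P w T)
    (hS : IsOuterCover P W w S) (hgU : (g : Pt) ∉ ⋃ i, Vis P (w i)) (hgS : g ∉ S) :
    Pi.single g 1 ∈ (affineSpan ℝ (cycleFace P G W w)).direction := by
  have hS' : IsOuterCover P W w (insert g S) :=
    ⟨fun h hh => (mem_insert.1 hh).elim (· ▸ hgU) (hS.1 h),
      fun w' hw' hw'r => (hS.2 w' hw' hw'r).imp fun h hh => ⟨mem_insert_of_mem hh.1, hh.2⟩⟩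
  simpa [indicatorVec, sum_insert hgS] using indicatorVec_sub_mem_direction hT hT hS' hS

lemma single_sub_single_mem_direction {T S : Finset ↥G} {g h : ↥G}
    (hT : IsTightCycleCover P w T) (hT' : IsTightCycleCover P w (insert g (T.erase h)))
    (hS : IsOuterCover P W w S) (hgT : g ∉ T) (hhT : h ∈ T) :
    Pi.single g 1 - Pi.single h 1 ∈ (affineSpan ℝ (cycleFace P G W w)).direction := by
  have hgT' : g ∉ T.erase h := fun hg => hgT (mem_of_mem_erase hg)
  have := indicatorVec_sub_mem_direction hT' hT hS hS
  rwa [add_sub_add_right_eq_sub, indicatorVec, indicatorVec, sum_insert hgT',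
    ← add_sum_erase T _ hhT, add_sub_add_right_eq_sub] at this

lemma isOuterCover_erase (hfull : affineSpan ℝ (convexHull ℝ (Feasible P G W)) = ⊤)
    (h4 : ∀ g ∈ G, g ∈ (⋃ i, Vis P (w i)) → ∀ w' ∈ W, w' ∈ Vis P g → w' ∈ Set.range w)
    (g₀ : ↥G) : IsOuterCover P W w (({g | (g : Pt) ∉ ⋃ i, Vis P (w i)} : Finset ↥G).erase g₀) := by
  rw [affineSpan_convexHull] at hfull
  obtain ⟨x, hx, hx0⟩ := exists_apply_ne_of_affineSpan_eq_top hfull g₀ 1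
  refine ⟨fun g hg => (mem_filter.1 (mem_of_mem_erase hg)).2, fun w' hw' hw'r => ?_⟩
  obtain ⟨g, hgv, hg1⟩ := hx.2 w' hw'
  have hgU : (g : Pt) ∉ ⋃ i, Vis P (w i) := fun hgU =>
    hw'r (h4 g g.2 hgU w' hw' (mem_vis_comm.1 hgv))
  exact ⟨g, mem_erase.2 ⟨by rintro rfl; exact hx0 hg1, mem_filter.2 ⟨mem_univ _, hgU⟩⟩, hgv⟩

end Covers

section OddCycle

open Fin.CommRing

variable {P : Set Pt} {G W : Finset Pt} {k : ℕ} [NeZero k] {w : Fin k → Pt}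

def IsEdgeGuards (P : Set Pt) (w : Fin k → Pt) (c : Fin k → ↥G) : Prop :=
  ∀ i, (c i : Pt) ∈ Vis P (w i) ∧ (c i : Pt) ∈ Vis P (w (i + 1))

lemma successive_add_one (hk : 1 < k) (i : Fin k) : Successive k i (i + 1) := by
  have hi := i.isLt
  unfold Successive
  rw [Fin.val_add, Fin.val_one', Nat.mod_eq_of_lt hk]
  rcases Nat.lt_or_ge (i.val + 1) k with h | h
  · exact Or.inl (Nat.mod_eq_of_lt h)
  · rw [show i.val + 1 = k by omega, Nat.mod_self]
    omega

lemma exists_isEdgeGuards (hk : 1 < k)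
    (h3 : ∀ i j : Fin k, Successive k i j → ∃ g ∈ G, w i ∈ Vis P g ∧ w j ∈ Vis P g) :
    ∃ c : Fin k → ↥G, IsEdgeGuards P w c := by
  choose c hcG hc using fun i => h3 i (i + 1) (successive_add_one hk i)
  exact ⟨fun i => ⟨c i, hcG i⟩, fun i => ⟨mem_vis_comm.1 (hc i).1, mem_vis_comm.1 (hc i).2⟩⟩

lemma IsEdgeGuards.injective {c : Fin k → ↥G} (hc : IsEdgeGuards P w c) (hk : 3 ≤ k)
    (hwinj : Injective w) (h1 : ∀ g ∈ G, (Vis P g ∩ Set.range w).ncard ≤ 2) : Injective c := by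
  intro i j hij
  by_contra hne
  have hsees : ∀ m ∈ ({i, i + 1, j, j + 1} : Finset (Fin k)), (c i : Pt) ∈ Vis P (w m) := by
    simp only [mem_insert, mem_singleton]
    rintro m (h | h | h | h) <;> rw [h]
    exacts [(hc i).1, (hc i).2, hij ▸ (hc j).1, hij ▸ (hc j).2]
  have hthree : 3 ≤ #({i, i + 1, j, j + 1} : Finset (Fin k)) := by
    by_cases hji : j = i + 1
    · subst hji
      refine le_of_eq_of_le (card_eq_three.2 ⟨i, i + 1, i + 1 + 1,
        (add_one_ne_self (by omega) i).symm, (add_one_add_one_ne_self (by omega) i).symm,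
        (add_one_ne_self (by omega) _).symm, rfl⟩).symm (card_le_card ?_)
      intro m; simp only [mem_insert, mem_singleton]; tauto
    · refine le_of_eq_of_le (card_eq_three.2 ⟨i, i + 1, j, (add_one_ne_self (by omega) i).symm,
        hne, fun h => hji h.symm, rfl⟩).symm (card_le_card ?_)
      intro m; simp only [mem_insert, mem_singleton]; tauto
  have := (card_le_card fun m hm => mem_filter.2 ⟨mem_univ _, hsees m hm⟩).trans
    (card_filter_mem_vis_le_two hwinj h1 (c i))
  omega

variable {c : Fin k → ↥G}

lemma isTightCycleCover_image_altIndices (hc : IsEdgeGuards P w c) (hcinj : Injective c)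
    (i : Fin k) : IsTightCycleCover P w ((altIndices i).image c) := by
  refine ⟨fun g hg => ?_, by rw [card_image_of_injective _ hcinj, card_altIndices], fun m => ?_⟩
  · obtain ⟨j, -, rfl⟩ := mem_image.1 hg
    exact Set.mem_iUnion.2 ⟨j, (hc j).1⟩
  · obtain ⟨j, hj, hmj⟩ := exists_mem_altIndices i m
    refine ⟨c j, mem_image_of_mem c hj, ?_⟩
    rcases hmj with h | h <;> rw [h]
    exacts [(hc j).1, (hc j).2]

lemma isTightCycleCover_swap (hk : 1 < k) (hodd : Odd k) (hc : IsEdgeGuards P w c)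
    (hcinj : Injective c) {i : Fin k} {g : ↥G} (hgi : (g : Pt) ∈ Vis P (w i))
    (hgT : g ∉ (altIndices (i + 1)).image c) :
    IsTightCycleCover P w (insert g (((altIndices (i + 1)).image c).erase (c i))) := by
  obtain ⟨hTU, hTcard, -⟩ := isTightCycleCover_image_altIndices hc hcinj (i + 1)
  have hci : c i ∈ (altIndices (i + 1)).image c :=
    mem_image_of_mem c (mem_altIndices_add_one hodd i)
  refine ⟨fun h hh => ?_, ?_, fun m => ?_⟩
  · rcases mem_insert.1 hh with rfl | hh
    exacts [Set.mem_iUnion.2 ⟨i, hgi⟩, hTU h (mem_of_mem_erase hh)]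
  · rw [card_insert_of_notMem fun h => hgT (mem_of_mem_erase h), card_erase_of_mem hci, hTcard]
    omega
  · by_cases hmi : m = i
    · exact ⟨g, mem_insert_self _ _, hmi ▸ hgi⟩
    · obtain ⟨j, hj, hji, hmj⟩ := exists_mem_altIndices_add_one_ne hk hmi
      refine ⟨c j, mem_insert_of_mem (mem_erase.2 ⟨hcinj.ne hji, mem_image_of_mem c hj⟩), ?_⟩
      rcases hmj with h | h <;> rw [h]
      exacts [(hc j).1, (hc j).2]

lemma single_sub_single_mem_direction_of_notMem (hk : 1 < k) (hodd : Odd k)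
    (hc : IsEdgeGuards P w c) (hcinj : Injective c) {S : Finset ↥G} (hS : IsOuterCover P W w S)
    {i : Fin k} {g : ↥G} (hgi : (g : Pt) ∈ Vis P (w i))
    (hgT : g ∉ (altIndices (i + 1)).image c) :
    Pi.single g 1 - Pi.single (c i) 1 ∈ (affineSpan ℝ (cycleFace P G W w)).direction :=
  single_sub_single_mem_direction (isTightCycleCover_image_altIndices hc hcinj _)
    (isTightCycleCover_swap hk hodd hc hcinj hgi hgT) hS hgT
    (mem_image_of_mem c (mem_altIndices_add_one hodd i))

lemma single_edge_sub_single_mem_direction (hk : 1 < k) (hodd : Odd k)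
    (hc : IsEdgeGuards P w c) (hcinj : Injective c) {S : Finset ↥G} (hS : IsOuterCover P W w S)
    (i : Fin k) :
    Pi.single (c i) 1 - Pi.single (c 0) 1 ∈ (affineSpan ℝ (cycleFace P G W w)).direction := by
  suffices ∀ n : ℕ, Pi.single (c n) 1 - Pi.single (c 0) 1 ∈
      (affineSpan ℝ (cycleFace P G W w)).direction by simpa using this i.val
  intro n
  induction n with
  | zero => simp
  | succ n ih =>
    have hstep := single_sub_single_mem_direction_of_notMem hk hodd hc hcinj hS (hc n).2
      fun h => notMem_altIndices_add_one_add_one hodd hk n (hcinj.mem_finset_image.1 h)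
    convert Submodule.sub_mem _ ih hstep using 1
    push_cast
    abel

lemma single_sub_single_mem_direction_of_mem (hk : 1 < k) (hodd : Odd k)
    (hc : IsEdgeGuards P w c) (hcinj : Injective c) {S : Finset ↥G} (hS : IsOuterCover P W w S)
    {g : ↥G} (hg : (g : Pt) ∈ ⋃ i, Vis P (w i)) :
    Pi.single g 1 - Pi.single (c 0) 1 ∈ (affineSpan ℝ (cycleFace P G W w)).direction := by
  obtain ⟨i, hgi⟩ := Set.mem_iUnion.1 hg
  by_cases hgT : g ∈ (altIndices (i + 1)).image c
  · obtain ⟨j, -, rfl⟩ := mem_image.1 hgT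
    exact single_edge_sub_single_mem_direction hk hodd hc hcinj hS j
  · simpa using Submodule.add_mem _
      (single_sub_single_mem_direction_of_notMem hk hodd hc hcinj hS hgi hgT)
      (single_edge_sub_single_mem_direction hk hodd hc hcinj hS i)

end OddCycle

theorem ec_facet_general (P : Set Pt) (G W : Finset Pt)
    (hfull : affineSpan ℝ (convexHull ℝ (Feasible P G W)) = ⊤)
    (k : ℕ) (hk : 3 ≤ k) (hodd : Odd k)
    (w : Fin k → Pt) (hwinj : Function.Injective w) (hwW : Set.range w ⊆ ↑W)
    (h1 : ∀ g ∈ G, (Vis P g ∩ Set.range w).ncard ≤ 2)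
    (h3 : ∀ i j : Fin k, Successive k i j →
      ∃ g ∈ G, w i ∈ Vis P g ∧ w j ∈ Vis P g)
    (h4 : ∀ g ∈ G, g ∈ (⋃ i, Vis P (w i)) → ∀ w' ∈ W, w' ∈ Vis P g →
      w' ∈ Set.range w) :
    IsFacet G (Feasible P G W)
      (fun g => if (g : Pt) ∈ ⋃ i, Vis P (w i) then 1 else 0)
      ((k + 1) / 2 : ℕ) := by
  have : NeZero k := ⟨by omega⟩
  obtain ⟨c, hc⟩ := exists_isEdgeGuards (by omega) h3
  have hcinj := hc.injective hk hwinj h1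
  have hS := isOuterCover_erase hfull h4
  have hc0 : (c 0 : Pt) ∈ ⋃ i, Vis P (w i) := Set.mem_iUnion.2 ⟨0, (hc 0).1⟩
  refine isFacet_of_ker_le_direction (fun h => by simpa [hc0] using congrFun h (c 0))
    (fun x hx => cast_le_dotProduct_of_mem_feasible hwinj hwW h1 hx) fun v hv =>
      mem_of_indicator_dotProduct_eq_zero (p := fun g : ↥G => (g : Pt) ∈ ⋃ i, Vis P (w i))
        (c 0) (fun g hg => ?_) (fun g hg => ?_) hv
  · exact single_mem_direction (isTightCycleCover_image_altIndices hc hcinj 0) (hS g) hg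
      (notMem_erase g _)
  · exact single_sub_single_mem_direction_of_mem (by omega) hodd hc hcinj (hS (c 0)) hg

/-- Let `conv(AGP(G,W))` be full-dimensional and let
`W̄ = {w 0, …, w (k-1)} ⊆ W` with `k ≥ 3` odd such that (1) no guard sees more than two
witnesses of `W̄`; (2) any two witnesses of `W̄` seen by a common guard form a
successive pair; (3) each successive pair is seen by some single guard of `G`; and
(4) no guard in `G ∩ V(W̄)` sees a witness of `W` outside `W̄`.  Then
`∑_{g ∈ V(W̄) ∩ G} x_g ≥ ⌈k/2⌉` is a facet of `conv(AGP(G,W))`. -/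
theorem ec_facet (P : Set Pt) (G W : Finset Pt) (hG : ↑G ⊆ P) (hW : ↑W ⊆ P)
    (hfull : affineSpan ℝ (convexHull ℝ (Feasible P G W)) = ⊤)
    (k : ℕ) (hk : 3 ≤ k) (hodd : Odd k)
    (w : Fin k → Pt) (hwinj : Function.Injective w) (hwW : Set.range w ⊆ ↑W)
    (h1 : ∀ g ∈ G, (Vis P g ∩ Set.range w).ncard ≤ 2)
    (h2 : ∀ g ∈ G, ∀ i j : Fin k, i ≠ j → w i ∈ Vis P g → w j ∈ Vis P g →
      Successive k i j)
    (h3 : ∀ i j : Fin k, Successive k i j →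
      ∃ g ∈ G, w i ∈ Vis P g ∧ w j ∈ Vis P g)
    (h4 : ∀ g ∈ G, g ∈ (⋃ i, Vis P (w i)) → ∀ w' ∈ W, w' ∈ Vis P g →
      w' ∈ Set.range w) :
    IsFacet G (Feasible P G W)
      (fun g => if (g : Pt) ∈ ⋃ i, Vis P (w i) then 1 else 0)
      ((k + 1) / 2 : ℕ) :=
  ec_facet_general P G W hfull k hk hodd w hwinj hwW h1 h3 h4
end

section
/- Let P ⊆ ℝ² and let ∅ ≠ S ⊆ P be a finite set of witnesses, with associated partition P = J0 ⊔ J1 ⊔ J2. Then for every finite set C ⊆ P of guards covering S (i.e., S ⊆ V(C)), one has 2·|C ∩ J2| + |C ∩ J1| ≥ 2. Equivalently, covering S requires at least one guard in J2 or at least two guards in J1, so the inequality α_S is valid for every binary feasible solution of AGP(G', P) for any finite guard set G' ⊆ P. -/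
/-- `J2`: points of `P` that see all of `S`. -/
def J2 (P S : Set Pt) : Set Pt := {p ∈ P | S ⊆ Vis P p}

/-- `J0`: points of `P` that see nothing of `S`. -/
def J0 (P S : Set Pt) : Set Pt := {p ∈ P | Vis P p ∩ S = ∅}

/-- `J1`: the remaining points of `P`. -/
def J1 (P S : Set Pt) : Set Pt := P \ (J0 P S ∪ J2 P S)

/-! A guard outside `J2` misses some witness, which must then be seen by a second guard;
both guards see a witness, so neither lies in `J0`. Hence a cover without a guard in `J2`
has two distinct guards in `J1`. -/

section Guards

variable {P S C : Set Pt}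

theorem mem_J1_of_mem_Vis {c s : Pt} (hc : c ∈ P) (hs : s ∈ S) (hsee : s ∈ Vis P c)
    (hc2 : c ∉ J2 P S) : c ∈ J1 P S := by
  refine ⟨hc, ?_⟩
  rintro (hc0 | hc2')
  · exact hc0.2.subset ⟨hsee, hs⟩
  · exact hc2 hc2'

theorem one_lt_ncard_inter_J1 (hCfin : C.Finite) (hCP : C ⊆ P) (hS : S.Nonempty)
    (hcover : S ⊆ ⋃ c ∈ C, Vis P c) (hC2 : C ∩ J2 P S = ∅) :
    1 < (C ∩ J1 P S).ncard := by
  have hnotJ2 : ∀ c ∈ C, c ∉ J2 P S := fun c hc hc2 => hC2.subset ⟨hc, hc2⟩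
  have hJ1 : ∀ c ∈ C, ∀ s ∈ S, s ∈ Vis P c → c ∈ C ∩ J1 P S := fun c hc s hs hsee =>
    ⟨hc, mem_J1_of_mem_Vis (hCP hc) hs hsee (hnotJ2 c hc)⟩
  obtain ⟨s₀, hs₀⟩ := hS
  obtain ⟨c₁, hc₁, hc₁s₀⟩ := Set.mem_iUnion₂.mp (hcover hs₀)
  obtain ⟨s₁, hs₁, hc₁s₁⟩ : ∃ s₁ ∈ S, s₁ ∉ Vis P c₁ :=
    Set.not_subset.mp fun hsub => hnotJ2 c₁ hc₁ ⟨hCP hc₁, hsub⟩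
  obtain ⟨c₂, hc₂, hc₂s₁⟩ := Set.mem_iUnion₂.mp (hcover hs₁)
  have hne : c₁ ≠ c₂ := by
    rintro rfl
    exact hc₁s₁ hc₂s₁
  exact (Set.one_lt_ncard_iff (hCfin.inter_of_left _)).mpr
    ⟨c₁, c₂, hJ1 c₁ hc₁ s₀ hs₀ hc₁s₀, hJ1 c₂ hc₂ s₁ hs₁ hc₂s₁, hne⟩

end Guards

theorem alphaS_valid_general (P : Set Pt) (S : Finset Pt) (hSne : S.Nonempty)
    (C : Finset Pt) (hCP : ↑C ⊆ P)
    (hcover : (↑S : Set Pt) ⊆ ⋃ c ∈ C, Vis P c) :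
    2 ≤ 2 * ((↑C : Set Pt) ∩ J2 P ↑S).ncard + ((↑C : Set Pt) ∩ J1 P ↑S).ncard := by
  rcases Set.eq_empty_or_nonempty ((↑C : Set Pt) ∩ J2 P ↑S) with hC2 | hC2
  · have hJ1 := one_lt_ncard_inter_J1 C.finite_toSet hCP (Finset.coe_nonempty.mpr hSne) hcover
      hC2
    omega
  · have hJ2 : 0 < ((↑C : Set Pt) ∩ J2 P ↑S).ncard :=
      (Set.ncard_pos (C.finite_toSet.inter_of_left _)).mpr hC2
    omega

/-- For every nonempty finite set `S ⊆ P` of witnesses and every finite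
set `C ⊆ P` of guards covering `S` (i.e. `S ⊆ V(C) = ⋃_{c ∈ C} V(c)`), one has
`2·|C ∩ J2| + |C ∩ J1| ≥ 2`; i.e. the inequality `α_S` is valid for every binary
feasible guard cover. -/
theorem alphaS_valid (P : Set Pt) (S : Finset Pt) (hSne : S.Nonempty) (hSP : ↑S ⊆ P)
    (C : Finset Pt) (hCP : ↑C ⊆ P)
    (hcover : (↑S : Set Pt) ⊆ ⋃ c ∈ C, Vis P c) :
    2 ≤ 2 * ((↑C : Set Pt) ∩ J2 P ↑S).ncard + ((↑C : Set Pt) ∩ J1 P ↑S).ncard :=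
  alphaS_valid_general P S hSne C hCP hcover
end

section
/- Let P ⊆ ℝ² and let W̄ = {w_1, …, w_k} ⊆ P be k distinct witnesses such that no point of P sees more than two of them (|V(p) ∩ W̄| ≤ 2 for every p ∈ P). Then every finite set C ⊆ P of guards covering W̄ (i.e., W̄ ⊆ V(C)) satisfies |C ∩ V(W̄)| ≥ ⌈k/2⌉; in particular the inequality ∑_{g ∈ V(W̄) ∩ G'} x_g ≥ ⌈k/2⌉ is valid for every binary feasible solution of AGP(G', P) for any finite guard set G' ⊆ P. -/
/-!
Assign to every witness a guard of `C` that sees it. By symmetry of visibility each such guard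
lies in `V(W̄)`, and since a guard sees at most two witnesses, at least `k / 2` distinct guards
are assigned.
-/

open Set

theorem Set.card_le_mul_ncard_of_forall_exists {α ι : Type*} [Fintype ι] (R : α → ι → Prop)
    {C : Set α} (hC : C.Finite) (n : ℕ) (hcover : ∀ i, ∃ c ∈ C, R c i)
    (hdeg : ∀ c ∈ C, ∀ i, R c i → {j | R c j}.ncard ≤ n) :
    Fintype.card ι ≤ n * (C ∩ {c | ∃ i, R c i}).ncard := by
  classical
  choose g hgC hgR using hcover
  have hfiber : ∀ c ∈ Finset.univ.image g, (Finset.univ.filter (g · = c)).card ≤ n := by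
    intro c hc
    obtain ⟨i, -, rfl⟩ := Finset.mem_image.1 hc
    calc (Finset.univ.filter (g · = g i)).card
        = (↑(Finset.univ.filter (g · = g i)) : Set ι).ncard := (ncard_coe_finset _).symm
      _ ≤ {j | R (g i) j}.ncard := ncard_le_ncard (fun j hj => by
          obtain ⟨-, hj⟩ := Finset.mem_filter.1 hj
          exact hj ▸ hgR j) (toFinite _)
      _ ≤ n := hdeg _ (hgC i) i (hgR i)
  have himage : (Finset.univ.image g).card ≤ (C ∩ {c | ∃ i, R c i}).ncard := by
    rw [← ncard_coe_finset]
    refine ncard_le_ncard (fun c hc => ?_) (hC.inter_of_left _)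
    obtain ⟨i, -, rfl⟩ := Finset.mem_image.1 hc
    exact ⟨hgC i, i, hgR i⟩
  calc Fintype.card ι = (Finset.univ : Finset ι).card := Finset.card_univ.symm
    _ ≤ n * (Finset.univ.image g).card := Finset.card_le_mul_card_image _ n hfiber
    _ ≤ n * (C ∩ {c | ∃ i, R c i}).ncard := Nat.mul_le_mul_left n himage

theorem mem_of_mem_Vis {P : Set Pt} {p q : Pt} (h : q ∈ Vis P p) : p ∈ P :=
  h.2 (left_mem_segment ℝ p q)

theorem mem_Vis_symm {P : Set Pt} {p q : Pt} (h : q ∈ Vis P p) : p ∈ Vis P q :=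
  ⟨mem_of_mem_Vis h, segment_symm ℝ q p ▸ h.2⟩

theorem ec_valid_general (P : Set Pt) (k : ℕ) (w : Fin k → Pt)
    (hwinj : Function.Injective w)
    (hsee : ∀ p ∈ P, (Vis P p ∩ Set.range w).ncard ≤ 2)
    (C : Finset Pt)
    (hcover : Set.range w ⊆ ⋃ c ∈ C, Vis P c) :
    (k + 1) / 2 ≤ ((↑C : Set Pt) ∩ ⋃ i, Vis P (w i)).ncard := by
  have hguard : ∀ i, ∃ c ∈ (C : Set Pt), w i ∈ Vis P c := by
    simpa [Set.range_subset_iff] using hcover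
  have hdeg : ∀ c ∈ (C : Set Pt), ∀ i, w i ∈ Vis P c → {j | w j ∈ Vis P c}.ncard ≤ 2 :=
    fun c _ i hi => by
      have := hsee c (mem_of_mem_Vis hi)
      rwa [← ncard_preimage_of_injective_subset_range hwinj inter_subset_right,
        preimage_inter_range] at this
  have hcount := Set.card_le_mul_ncard_of_forall_exists (fun c i => w i ∈ Vis P c)
    C.finite_toSet 2 hguard hdeg
  have hused : (C : Set Pt) ∩ {c | ∃ i, w i ∈ Vis P c} ⊆ (C : Set Pt) ∩ ⋃ i, Vis P (w i) :=
    fun c ⟨hc, i, hi⟩ => ⟨hc, mem_iUnion.2 ⟨i, mem_Vis_symm hi⟩⟩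
  have hmono := ncard_le_ncard hused (C.finite_toSet.inter_of_left _)
  rw [Fintype.card_fin] at hcount
  omega

/-- Let `W̄ = {w 0, …, w (k-1)} ⊆ P` be `k` distinct witnesses such
that no point of `P` sees more than two of them.  Then every finite guard set `C ⊆ P`
covering `W̄` satisfies `|C ∩ V(W̄)| ≥ ⌈k/2⌉`. -/
theorem ec_valid (P : Set Pt) (k : ℕ) (w : Fin k → Pt)
    (hwinj : Function.Injective w) (hwP : Set.range w ⊆ P)
    (hsee : ∀ p ∈ P, (Vis P p ∩ Set.range w).ncard ≤ 2)
    (C : Finset Pt) (hCP : ↑C ⊆ P)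
    (hcover : Set.range w ⊆ ⋃ c ∈ C, Vis P c) :
    (k + 1) / 2 ≤ ((↑C : Set Pt) ∩ ⋃ i, Vis P (w i)).ncard :=
  ec_valid_general P k w hwinj hsee C hcover
end

section
/- The bound k ≥ 4 in the statement 'a full circulant polygon P_k^{k−1} with k ≥ 4 has no holes' is tight: there exists a full circulant polygon P_3^2, i.e., a polygonal region P ⊆ ℝ² together with pairwise distinct points g_1, g_2, g_3 ∈ P and w_1, w_2, w_3 ∈ P satisfying V(g_i) ∩ {w_1,w_2,w_3} = {w_1,w_2,w_3} \ {w_i} for each i and |V(w) ∩ {g_1,g_2,g_3}| ≥ 2 for every w ∈ P, such that the complement ℝ² \ P has a bounded connected component (P has a hole). -/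
/-!
Take the triangle with corners `(0,0)`, `(6,0)`, `(0,6)` (the guards) and cut out the open triangle
`1 < x`, `1 < y`, `x + y < 4`. What remains is covered by three convex strips along the sides of the
hole, each containing exactly two guards, so every point sees at least two guards. The witness `w i`
lies in the strip missing `g i`, and the segment from `g i` to `w i` crosses the hole. The hole is
open and disjoint from the open exterior of the triangle, so it contains the whole component of the
complement through any of its points.
-/

open Set Function

noncomputable def pt (a b : ℝ) : Pt := WithLp.toLp 2 ![a, b]

@[simp] lemma pt_apply_zero (a b : ℝ) : pt a b 0 = a := rfl
@[simp] lemma pt_apply_one (a b : ℝ) : pt a b 1 = b := rfl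

lemma pt_eq_pt_iff {a b c d : ℝ} : pt a b = pt c d ↔ a = c ∧ b = d := by
  refine ⟨fun h => ⟨by simpa using congrArg (· 0) h, by simpa using congrArg (· 1) h⟩, ?_⟩
  rintro ⟨rfl, rfl⟩
  rfl

lemma mem_segment_of_coords {u v p : Pt} {t : ℝ} (h0 : 0 ≤ t) (h1 : t ≤ 1)
    (hx : p 0 = (1 - t) * u 0 + t * v 0) (hy : p 1 = (1 - t) * u 1 + t * v 1) :
    p ∈ segment ℝ u v := by
  refine ⟨1 - t, t, by linarith, h0, by ring, ?_⟩
  ext i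
  fin_cases i
  · simp [hx]
  · simp [hy]

lemma mem_segment_of_apply_one_eq {p : Pt} {c h : ℝ} (hh : 0 < h) (hy : p 1 = c)
    (h0 : 0 ≤ p 0) (h1 : p 0 ≤ h) : p ∈ segment ℝ (pt 0 c) (pt h c) :=
  mem_segment_of_coords (t := p 0 / h) (by positivity) ((div_le_one hh).2 h1)
    (by field_simp; simp) (by simp only [hy, pt_apply_one]; ring)

lemma mem_segment_of_apply_zero_eq {p : Pt} {c h : ℝ} (hh : 0 < h) (hx : p 0 = c)
    (h0 : 0 ≤ p 1) (h1 : p 1 ≤ h) : p ∈ segment ℝ (pt c 0) (pt c h) :=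
  mem_segment_of_coords (t := p 1 / h) (by positivity) ((div_le_one hh).2 h1)
    (by simp only [hx, pt_apply_zero]; ring) (by field_simp; simp)

lemma mem_segment_of_add_eq {p : Pt} {c : ℝ} (hc : 0 < c) (hs : p 0 + p 1 = c)
    (h0 : 0 ≤ p 0) (h1 : 0 ≤ p 1) : p ∈ segment ℝ (pt c 0) (pt 0 c) :=
  mem_segment_of_coords (t := p 1 / c) (by positivity) ((div_le_one hc).2 (by linarith))
    (by simp only [pt_apply_zero, mul_zero, add_zero]; field_simp; linarith) (by field_simp; simp)

def halfPlane (a b c : ℝ) : Set Pt := {p | a * p 0 + b * p 1 ≤ c}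

section halfPlane

variable {a b c : ℝ}

@[simp] lemma mem_halfPlane {p : Pt} : p ∈ halfPlane a b c ↔ a * p 0 + b * p 1 ≤ c := Iff.rfl

lemma continuous_linearForm (a b : ℝ) : Continuous fun p : Pt => a * p 0 + b * p 1 := by
  fun_prop

lemma convex_halfPlane_s15 : Convex ℝ (halfPlane a b c) :=
  convex_halfSpace_le ⟨fun p q => by simp only [PiLp.add_apply]; ring,
    fun r p => by simp only [PiLp.smul_apply, smul_eq_mul]; ring⟩ c

lemma isClosed_halfPlane : IsClosed (halfPlane a b c) :=
  isClosed_le (continuous_linearForm a b) continuous_const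

lemma eq_of_mem_frontier_halfPlane {p : Pt} (hp : p ∈ frontier (halfPlane a b c)) :
    a * p 0 + b * p 1 = c :=
  frontier_le_subset_eq (continuous_linearForm a b) continuous_const hp

lemma mem_interior_halfPlane {p : Pt} (h : a * p 0 + b * p 1 < c) :
    p ∈ interior (halfPlane a b c) :=
  interior_maximal (fun _ hq => le_of_lt hq)
    (isOpen_lt (continuous_linearForm a b) continuous_const) h

end halfPlane

section

variable {X : Type*} [TopologicalSpace X]

lemma frontier_inter_subset_union (s t : Set X) : frontier (s ∩ t) ⊆ frontier s ∪ frontier t :=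
  (frontier_inter_subset s t).trans (union_subset_union inter_subset_left inter_subset_right)

lemma frontier_union_subset_union (s t : Set X) : frontier (s ∪ t) ⊆ frontier s ∪ frontier t :=
  (frontier_union_subset s t).trans (union_subset_union inter_subset_left inter_subset_right)

lemma connectedComponentIn_subset_of_subset_union {s U V : Set X} {x : X} (hU : IsOpen U)
    (hV : IsOpen V) (hUV : Disjoint U V) (hs : s ⊆ U ∪ V) (hxs : x ∈ s) (hxU : x ∈ U) :
    connectedComponentIn s x ⊆ U :=
  isPreconnected_connectedComponentIn.subset_left_of_subset_union hU hV hUV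
    ((connectedComponentIn_subset s x).trans hs) ⟨x, mem_connectedComponentIn hxs, hxU⟩

end

lemma Convex.subset_closure_interior {E : Type*} [AddCommGroup E] [Module ℝ E]
    [TopologicalSpace E] [IsTopologicalAddGroup E] [ContinuousSMul ℝ E] {s t : Set E}
    (hs : Convex ℝ s) (hs' : (interior s).Nonempty) (hst : s ⊆ t) :
    s ⊆ closure (interior t) := by
  calc s ⊆ closure s := subset_closure
    _ = closure (interior s) := (hs.closure_interior_eq_closure_of_nonempty_interior hs').symm
    _ ⊆ closure (interior t) := closure_mono (interior_mono hst)

lemma exists_finset_frontier_subset_segments {ι : Type*} [Fintype ι] {e : ι → Pt × Pt}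
    {s : Set Pt} (h : s ⊆ ⋃ i, segment ℝ (e i).1 (e i).2) :
    ∃ E : Finset (Pt × Pt), s ⊆ ⋃ x ∈ E, segment ℝ x.1 x.2 := by
  classical
  refine ⟨Finset.univ.image e, h.trans (iUnion_subset fun i => ?_)⟩
  exact subset_biUnion_of_mem (u := fun x : Pt × Pt => segment ℝ x.1 x.2)
    (Finset.mem_coe.2 (Finset.mem_image_of_mem e (Finset.mem_univ i)))

section Visibility

variable {P s : Set Pt}

lemma mem_vis_of_convex (hs : Convex ℝ s) (hsP : s ⊆ P) {p q : Pt} (hp : p ∈ s) (hq : q ∈ s) :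
    q ∈ Vis P p :=
  ⟨hsP hq, (hs.segment_subset hp hq).trans hsP⟩

lemma notMem_vis_of_mem_segment {p q x : Pt} (hx : x ∈ segment ℝ p q) (hxP : x ∉ P) :
    q ∉ Vis P p :=
  fun hq => hxP (hq.2 hx)

end Visibility

section ConvexCover

variable {P : Set Pt} {k : ℕ} {g w : Fin k → Pt} {S : Fin k → Set Pt}

lemma vis_inter_range_eq_of_convex_cover (hw : Injective w) (hS : ∀ j, Convex ℝ (S j))
    (hSP : ∀ j, S j ⊆ P) (hgS : ∀ i j, i ≠ j → g i ∈ S j) (hwS : ∀ j, w j ∈ S j)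
    (hblind : ∀ i, w i ∉ Vis P (g i)) (i : Fin k) :
    Vis P (g i) ∩ range w = range w \ {w i} := by
  ext q
  constructor
  · rintro ⟨hq, j, rfl⟩
    exact ⟨⟨j, rfl⟩, fun hji => hblind i (hw hji ▸ hq)⟩
  · rintro ⟨⟨j, rfl⟩, hji⟩
    have hij : i ≠ j := by rintro rfl; exact hji rfl
    exact ⟨mem_vis_of_convex (hS j) (hSP j) (hgS i j hij) (hwS j), j, rfl⟩

lemma le_ncard_vis_inter_range_of_convex_cover (hg : Injective g) (hS : ∀ j, Convex ℝ (S j))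
    (hSP : ∀ j, S j ⊆ P) (hcover : P ⊆ ⋃ j, S j) (hgS : ∀ i j, i ≠ j → g i ∈ S j)
    {p : Pt} (hp : p ∈ P) : k - 1 ≤ (Vis P p ∩ range g).ncard := by
  obtain ⟨j, hpj⟩ := mem_iUnion.1 (hcover hp)
  have hsees : range g \ {g j} ⊆ Vis P p ∩ range g := by
    rintro _ ⟨⟨i, rfl⟩, hij⟩
    have hij : i ≠ j := by rintro rfl; exact hij rfl
    exact ⟨mem_vis_of_convex (hS j) (hSP j) hpj (hgS i j hij), i, rfl⟩
  calc k - 1 = (range g \ {g j}).ncard := by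
        rw [ncard_sdiff_singleton_of_mem (mem_range_self j), ncard_range_of_injective hg,
          Nat.card_eq_fintype_card, Fintype.card_fin]
    _ ≤ (Vis P p ∩ range g).ncard := ncard_le_ncard hsees ((finite_range g).subset inter_subset_right)

theorem isFullCirculant_of_convex_cover (hk : 1 < k) (hP : IsPolygonalRegion P)
    (hg : Injective g) (hw : Injective w) (hS : ∀ j, Convex ℝ (S j)) (hSP : ∀ j, S j ⊆ P)
    (hcover : P ⊆ ⋃ j, S j) (hgS : ∀ i j, i ≠ j → g i ∈ S j) (hwS : ∀ j, w j ∈ S j)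
    (hblind : ∀ i, w i ∉ Vis P (g i)) : IsFullCirculant P k g w := by
  refine ⟨hP, hg, hw, fun i => ?_, fun j => hSP j (hwS j),
    vis_inter_range_eq_of_convex_cover hw hS hSP hgS hwS hblind,
    fun p hp => le_ncard_vis_inter_range_of_convex_cover hg hS hSP hcover hgS hp⟩
  obtain ⟨j, hji⟩ := Fintype.exists_ne_of_one_lt_card (by simpa using hk) i
  exact hSP j (hgS i j hji.symm)

end ConvexCover

def outerTriangle : Set Pt := halfPlane (-1) 0 0 ∩ halfPlane 0 (-1) 0 ∩ halfPlane 1 1 6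

/- `side j` is the closed half-plane beyond one side of the hole; the strip `outerTriangle ∩ side j`
contains every guard except `guards j`. -/
def side : Fin 3 → Set Pt := ![halfPlane (-1) (-1) (-4), halfPlane 1 0 1, halfPlane 0 1 1]

def rim : Set Pt := side 0 ∪ side 1 ∪ side 2

def region : Set Pt := outerTriangle ∩ rim

def strip (j : Fin 3) : Set Pt := outerTriangle ∩ side j

noncomputable def guards : Fin 3 → Pt := ![pt 0 0, pt 6 0, pt 0 6]

noncomputable def witnesses : Fin 3 → Pt := ![pt (5/2) (5/2), pt (1/2) 2, pt 2 (1/2)]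

lemma convex_outerTriangle : Convex ℝ outerTriangle :=
  (convex_halfPlane_s15.inter convex_halfPlane_s15).inter convex_halfPlane_s15

lemma isClosed_outerTriangle : IsClosed outerTriangle :=
  (isClosed_halfPlane.inter isClosed_halfPlane).inter isClosed_halfPlane

lemma isBounded_outerTriangle : Bornology.IsBounded outerTriangle := by
  refine (Metric.isBounded_closedBall (x := (0 : Pt)) (r := 6)).subset ?_
  rintro p ⟨⟨hx, hy⟩, hs⟩
  simp only [mem_halfPlane] at hx hy hs
  rw [mem_closedBall_zero_iff, EuclideanSpace.norm_eq, Fin.sum_univ_two,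
    Real.sqrt_le_left (by norm_num), Real.norm_eq_abs, Real.norm_eq_abs, sq_abs, sq_abs]
  nlinarith

lemma isClosed_rim : IsClosed rim :=
  (isClosed_halfPlane.union isClosed_halfPlane).union isClosed_halfPlane

lemma notMem_rim_iff {p : Pt} : p ∉ rim ↔ 1 < p 0 ∧ 1 < p 1 ∧ p 0 + p 1 < 4 := by
  simp only [rim, side, Matrix.cons_val_zero, Matrix.cons_val_one, Matrix.cons_val_two,
    Matrix.tail_cons, Matrix.head_cons, mem_union, mem_halfPlane, not_or, not_le]
  constructor
  · rintro ⟨⟨h₁, h₂⟩, h₃⟩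
    exact ⟨by linarith, by linarith, by linarith⟩
  · rintro ⟨h₁, h₂, h₃⟩
    exact ⟨⟨by linarith, by linarith⟩, by linarith⟩

lemma compl_rim_subset_outerTriangle : rimᶜ ⊆ outerTriangle := by
  intro p hp
  obtain ⟨h₁, h₂, h₃⟩ := notMem_rim_iff.1 hp
  simp only [outerTriangle, mem_inter_iff, mem_halfPlane]
  refine ⟨⟨?_, ?_⟩, ?_⟩ <;> linarith

lemma isClosed_region : IsClosed region := isClosed_outerTriangle.inter isClosed_rim

lemma region_eq_iUnion_strip : region = ⋃ j, strip j := by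
  ext p
  simp only [region, rim, strip, mem_iUnion, Fin.exists_fin_succ, mem_inter_iff, mem_union,
    IsEmpty.exists_iff, or_false]
  tauto

lemma convex_strip (j : Fin 3) : Convex ℝ (strip j) :=
  convex_outerTriangle.inter (by fin_cases j <;> exact convex_halfPlane_s15)

lemma strip_subset_region (j : Fin 3) : strip j ⊆ region :=
  region_eq_iUnion_strip ▸ subset_iUnion strip j

lemma guards_mem_strip {i j : Fin 3} (hij : i ≠ j) : guards i ∈ strip j := by
  revert hij
  fin_cases i <;> fin_cases j <;> norm_num [guards, strip, outerTriangle, side]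

lemma witnesses_mem_interior_strip (j : Fin 3) : witnesses j ∈ interior (strip j) := by
  simp only [strip, outerTriangle, interior_inter]
  fin_cases j <;> refine ⟨⟨⟨?_, ?_⟩, ?_⟩, ?_⟩ <;> apply mem_interior_halfPlane <;>
    norm_num [witnesses]

lemma guards_injective : Injective guards := by
  intro i j
  fin_cases i <;> fin_cases j <;> norm_num [guards, pt_eq_pt_iff]

lemma witnesses_injective : Injective witnesses := by
  intro i j
  fin_cases i <;> fin_cases j <;> norm_num [witnesses, pt_eq_pt_iff]

lemma isConnected_region : IsConnected region := by
  rw [region_eq_iUnion_strip]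
  refine IsConnected.iUnion_of_reflTransGen (fun j => (convex_strip j).isConnected
    ⟨witnesses j, interior_subset (witnesses_mem_interior_strip j)⟩) fun i j => .single ?_
  obtain ⟨m, hmi, hmj⟩ : ∃ m : Fin 3, m ≠ i ∧ m ≠ j := by revert i j; decide
  exact ⟨guards m, guards_mem_strip hmi, guards_mem_strip hmj⟩

lemma region_eq_closure_interior : region = closure (interior region) :=
  subset_antisymm
    (region_eq_iUnion_strip.subset.trans <| iUnion_subset fun j =>
      (convex_strip j).subset_closure_interior ⟨_, witnesses_mem_interior_strip j⟩
        (strip_subset_region j))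
    (closure_minimal interior_subset isClosed_region)

lemma frontier_region_subset_lines : frontier region ⊆
    {p | p 0 = 0 ∨ p 1 = 0 ∨ p 0 + p 1 = 6 ∨ p 0 + p 1 = 4 ∨ p 0 = 1 ∨ p 1 = 1} := by
  intro p hp
  have hsplit : frontier region ⊆ ((frontier (halfPlane (-1) 0 0) ∪ frontier (halfPlane 0 (-1) 0))
      ∪ frontier (halfPlane 1 1 6)) ∪ ((frontier (side 0) ∪ frontier (side 1)) ∪ frontier (side 2)) :=
    (frontier_inter_subset_union _ _).trans <| union_subset_union
      ((frontier_inter_subset_union _ _).trans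
        (union_subset_union_left _ (frontier_inter_subset_union _ _)))
      ((frontier_union_subset_union _ _).trans
        (union_subset_union_left _ (frontier_union_subset_union _ _)))
  rcases hsplit hp with ((h | h) | h) | ((h | h) | h) <;>
    have hline := eq_of_mem_frontier_halfPlane h
  · exact Or.inl (by linarith)
  · exact Or.inr <| Or.inl (by linarith)
  · exact Or.inr <| Or.inr <| Or.inl (by linarith)
  · exact Or.inr <| Or.inr <| Or.inr <| Or.inl (by linarith)
  · exact Or.inr <| Or.inr <| Or.inr <| Or.inr <| Or.inl (by linarith)
  · exact Or.inr <| Or.inr <| Or.inr <| Or.inr <| Or.inr (by linarith)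

noncomputable def regionEdge : Fin 6 → Pt × Pt :=
  ![(pt 0 0, pt 0 6), (pt 0 0, pt 6 0), (pt 6 0, pt 0 6),
    (pt 4 0, pt 0 4), (pt 1 0, pt 1 6), (pt 0 1, pt 6 1)]

lemma frontier_region_subset_edges :
    frontier region ⊆ ⋃ i, segment ℝ (regionEdge i).1 (regionEdge i).2 := by
  intro p hp
  obtain ⟨⟨⟨hx, hy⟩, hs⟩, -⟩ := isClosed_region.frontier_subset hp
  simp only [mem_halfPlane] at hx hy hs
  have hx' : p 0 ≤ 6 := by linarith
  have hy' : p 1 ≤ 6 := by linarith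
  rcases frontier_region_subset_lines hp with h | h | h | h | h | h
  · exact mem_iUnion_of_mem 0
      (mem_segment_of_apply_zero_eq (by norm_num) h (by linarith) hy')
  · exact mem_iUnion_of_mem 1
      (mem_segment_of_apply_one_eq (by norm_num) h (by linarith) hx')
  · exact mem_iUnion_of_mem 2
      (mem_segment_of_add_eq (by norm_num) h (by linarith) (by linarith))
  · exact mem_iUnion_of_mem 3
      (mem_segment_of_add_eq (by norm_num) h (by linarith) (by linarith))
  · exact mem_iUnion_of_mem 4
      (mem_segment_of_apply_zero_eq (by norm_num) h (by linarith) hy')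
  · exact mem_iUnion_of_mem 5
      (mem_segment_of_apply_one_eq (by norm_num) h (by linarith) hx')

lemma isPolygonalRegion_region : IsPolygonalRegion region :=
  ⟨Metric.isCompact_of_isClosed_isBounded isClosed_region
      (isBounded_outerTriangle.subset inter_subset_left),
    isConnected_region, region_eq_closure_interior,
    exists_finset_frontier_subset_segments frontier_region_subset_edges⟩

lemma witnesses_notMem_vis (i : Fin 3) : witnesses i ∉ Vis region (guards i) := by
  obtain ⟨x, hx, hxrim⟩ : ∃ x ∈ segment ℝ (guards i) (witnesses i), x ∉ rim := by
    fin_cases i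
    · exact ⟨pt (3/2) (3/2), mem_segment_of_coords (t := 3/5) (by norm_num) (by norm_num)
        (by norm_num [guards, witnesses]) (by norm_num [guards, witnesses]),
        notMem_rim_iff.2 (by norm_num)⟩
    · exact ⟨pt (15/8) (3/2), mem_segment_of_coords (t := 3/4) (by norm_num) (by norm_num)
        (by norm_num [guards, witnesses]) (by norm_num [guards, witnesses]),
        notMem_rim_iff.2 (by norm_num)⟩
    · exact ⟨pt (3/2) (15/8), mem_segment_of_coords (t := 3/4) (by norm_num) (by norm_num)
        (by norm_num [guards, witnesses]) (by norm_num [guards, witnesses]),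
        notMem_rim_iff.2 (by norm_num)⟩
  exact notMem_vis_of_mem_segment hx fun hxP => hxrim hxP.2

lemma isBounded_connectedComponentIn_compl_region {p : Pt} (hp : p ∉ rim) :
    Bornology.IsBounded (connectedComponentIn regionᶜ p) := by
  have hsub : connectedComponentIn regionᶜ p ⊆ rimᶜ :=
    connectedComponentIn_subset_of_subset_union isClosed_rim.isOpen_compl
      isClosed_outerTriangle.isOpen_compl
      (disjoint_compl_right.mono_left compl_rim_subset_outerTriangle)
      (by rw [region, compl_inter, union_comm]) (fun h => hp h.2) hp
  exact isBounded_outerTriangle.subset (hsub.trans compl_rim_subset_outerTriangle)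

/-- The bound `k ≥ 4` in "a full circulant polygon `P_k^{k-1}` with
`k ≥ 4` has no holes" is tight: there exists a full circulant polygon `P_3^2`
(e.g. a triangle with a concentric triangular hole) whose complement has a bounded
connected component. -/
theorem fullCirculant_three_with_hole :
    ∃ (P : Set Pt) (g w : Fin 3 → Pt),
      IsFullCirculant P 3 g w ∧
      ∃ p : Pt, p ∉ P ∧ Bornology.IsBounded (connectedComponentIn Pᶜ p) := by
  have hcenter : pt (3/2) (3/2) ∉ rim := notMem_rim_iff.2 (by norm_num)
  refine ⟨region, guards, witnesses, ?_, pt (3/2) (3/2), fun h => hcenter h.2,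
    isBounded_connectedComponentIn_compl_region hcenter⟩
  exact isFullCirculant_of_convex_cover (S := strip) (by norm_num) isPolygonalRegion_region
    guards_injective witnesses_injective convex_strip strip_subset_region
    region_eq_iUnion_strip.subset (fun _ _ => guards_mem_strip)
    (fun j => interior_subset (witnesses_mem_interior_strip j)) witnesses_notMem_vis
end
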